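/- arXiv:1404.6942 — 11 statements merged into one kernel-verified Lean document; each statement's English description precedes it below -/
import Mathlib

section
/- Let R be the F-algebra of upper triangular 2×2 matrices over the polynomial algebra F[x]. Then the Lie subalgebra [R,R] of R⁽⁻⁾ generated by all commutators ab − ba equals the set of matrices whose only nonzero entry is the (1,2) entry (an element of F[x]), and [R,R] is not finitely generated as a Lie algebra. -/
open Polynomial

def upperTriangular2 (F : Type*) [Field F] :
    Subalgebra F (Matrix (Fin 2) (Fin 2) (Polynomial F)) where
  carrier := {M | M 1 0 = 0}
  mul_mem' := by
    intro a b ha hb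
    simp only [Set.mem_setOf_eq] at *
    show (a * b) 1 0 = 0
    rw [Matrix.mul_apply, Fin.sum_univ_two, ha, hb]
    simp
  add_mem' := by
    intro a b ha hb
    simp only [Set.mem_setOf_eq] at *
    show (a + b) 1 0 = 0
    rw [Matrix.add_apply, ha, hb, add_zero]
  algebraMap_mem' := by
    intro r
    simp [Set.mem_setOf_eq, Matrix.algebraMap_matrix_apply]

attribute [local instance 100] LieRing.ofAssociativeRing

/- Every commutator of upper triangular matrices is strictly upper triangular, since the diagonal
entries commute, and conversely `!![0, p; 0, 0] = ⁅e₁₁, !![0, p; 0, 0]⁆`. So `[R,R]` is the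
strictly upper triangular part, a copy of `F[x]` on which the bracket vanishes. An abelian Lie
algebra generated by a finite set is spanned by it as a vector space, but `F[x]` is not a finitely
generated `F`-module. -/

theorem LieSubalgebra.fg_toSubmodule_of_lieSpan_eq {R L : Type*} [CommRing R] [LieRing L]
    [LieAlgebra R L] {K : LieSubalgebra R L} (hK : ∀ x ∈ K, ∀ y ∈ K, ⁅x, y⁆ = 0)
    {S : Finset L} (hS : LieSubalgebra.lieSpan R L (S : Set L) = K) : K.toSubmodule.FG := by
  have hSK : (S : Set L) ⊆ K := hS ▸ LieSubalgebra.subset_lieSpan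
  refine ⟨S, ?_⟩
  rw [← hS, LieSubalgebra.coe_lieSpan_eq_span_of_forall_lie_eq_zero]
  exact fun x hx y hy ↦ hK x (hSK hx) y (hSK hy)

namespace upperTriangular2

variable {F : Type*} [Field F]

theorem coe_lie (a b : upperTriangular2 F) :
    ((⁅a, b⁆ : upperTriangular2 F) : Matrix (Fin 2) (Fin 2) F[X]) = a * b - b * a :=
  rfl

variable (F) in
noncomputable def upperRight : F[X] →ₗ[F] upperTriangular2 F where
  toFun p := ⟨!![0, p; 0, 0], rfl⟩
  map_add' p q := by ext i j; fin_cases i <;> fin_cases j <;> simp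
  map_smul' c p := by ext i j; fin_cases i <;> fin_cases j <;> simp

theorem coe_upperRight (p : F[X]) :
    (upperRight F p : Matrix (Fin 2) (Fin 2) F[X]) = !![0, p; 0, 0] :=
  rfl

theorem upperRight_injective : Function.Injective (upperRight F) := fun p q h ↦ by
  simpa [coe_upperRight] using congr_fun₂ (congrArg Subtype.val h) 0 1

theorem lie_eq_upperRight (a b : upperTriangular2 F) :
    ⁅a, b⁆ = upperRight F (a.1 0 0 * b.1 0 1 + a.1 0 1 * b.1 1 1
      - (b.1 0 0 * a.1 0 1 + b.1 0 1 * a.1 1 1)) := by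
  have ha : a.1 1 0 = 0 := a.2
  have hb : b.1 1 0 = 0 := b.2
  ext i j
  fin_cases i <;> fin_cases j <;>
    simp [coe_lie, coe_upperRight, Matrix.mul_apply, ha, hb, mul_comm]

theorem upperRight_eq_lie (p : F[X]) :
    upperRight F p = ⁅(⟨!![1, 0; 0, 0], rfl⟩ : upperTriangular2 F), upperRight F p⁆ := by
  rw [lie_eq_upperRight]
  simp [coe_upperRight]

theorem lie_upperRight_upperRight (p q : F[X]) :
    ⁅upperRight F p, upperRight F q⁆ = 0 := by
  rw [lie_eq_upperRight, ← (upperRight F).map_zero]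
  simp [coe_upperRight]

variable (F) in
noncomputable def strictUpper : LieSubalgebra F (upperTriangular2 F) :=
  { LinearMap.range (upperRight F) with
    lie_mem' := by
      rintro _ _ ⟨p, rfl⟩ ⟨q, rfl⟩
      rw [lie_upperRight_upperRight]
      exact (LinearMap.range (upperRight F)).zero_mem }

theorem mem_strictUpper {M : upperTriangular2 F} :
    M ∈ strictUpper F ↔ ∃ p, upperRight F p = M :=
  Iff.rfl

theorem lie_eq_zero_of_mem_strictUpper {M N : upperTriangular2 F} (hM : M ∈ strictUpper F)
    (hN : N ∈ strictUpper F) : ⁅M, N⁆ = 0 := by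
  obtain ⟨p, rfl⟩ := hM
  obtain ⟨q, rfl⟩ := hN
  exact lie_upperRight_upperRight p q

theorem not_fg_strictUpper : ¬ (strictUpper F).toSubmodule.FG := fun h ↦ by
  have : (⊤ : Submodule F F[X]).FG := by
    refine Submodule.fg_of_fg_map_injective _ upperRight_injective ?_
    rwa [Submodule.map_top]
  exact Polynomial.not_finite (Module.finite_def.mpr this)

theorem lieSpan_commutators_eq_strictUpper :
    LieSubalgebra.lieSpan F (upperTriangular2 F) {x | ∃ a b : upperTriangular2 F, x = ⁅a, b⁆} =
      strictUpper F := by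
  apply le_antisymm
  · rw [LieSubalgebra.lieSpan_le]
    rintro _ ⟨a, b, rfl⟩
    exact ⟨_, (lie_eq_upperRight a b).symm⟩
  · rintro _ ⟨p, rfl⟩
    exact LieSubalgebra.subset_lieSpan ⟨_, _, upperRight_eq_lie p⟩

end upperTriangular2

open upperTriangular2 in
theorem upperTriangular2_commutator_eq_and_not_fg_general
    (F : Type*) [Field F] :
    ((LieSubalgebra.lieSpan F (upperTriangular2 F)
        {x | ∃ a b : upperTriangular2 F, x = ⁅a, b⁆} : Set (upperTriangular2 F)) =
      {M : upperTriangular2 F |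
        ∃ p : Polynomial F,
          (M : Matrix (Fin 2) (Fin 2) (Polynomial F)) = !![0, p; 0, 0]}) ∧
    ¬ ∃ S : Finset (upperTriangular2 F),
        (S : Set (upperTriangular2 F)) ⊆
          (LieSubalgebra.lieSpan F (upperTriangular2 F)
            {x | ∃ a b : upperTriangular2 F, x = ⁅a, b⁆} : Set (upperTriangular2 F)) ∧
        LieSubalgebra.lieSpan F (upperTriangular2 F) (S : Set (upperTriangular2 F)) =
          LieSubalgebra.lieSpan F (upperTriangular2 F)
            {x | ∃ a b : upperTriangular2 F, x = ⁅a, b⁆} := by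
  rw [lieSpan_commutators_eq_strictUpper]
  refine ⟨Set.ext fun M ↦ ?_, fun ⟨S, _, hS⟩ ↦ not_fg_strictUpper (F := F) ?_⟩
  · simp only [SetLike.mem_coe, mem_strictUpper, Set.mem_ofPred_eq, Subtype.ext_iff,
      coe_upperRight, eq_comm]
  · exact LieSubalgebra.fg_toSubmodule_of_lieSpan_eq
      (fun _ hx _ hy ↦ lie_eq_zero_of_mem_strictUpper hx hy) hS

/-- **Example 1.**  For `R` the algebra of upper triangular `2 × 2` matrices over `F[x]`,
the Lie subalgebra `[R,R]` of `R⁽⁻⁾` generated by all commutators equals the set of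
matrices whose only possibly nonzero entry is the `(1,2)` entry, and `[R,R]` is not
finitely generated as a Lie algebra. -/
theorem upperTriangular2_commutator_eq_and_not_fg
    (F : Type*) [Field F] (hchar : (2 : F) ≠ 0) :
    ((LieSubalgebra.lieSpan F (upperTriangular2 F)
        {x | ∃ a b : upperTriangular2 F, x = ⁅a, b⁆} : Set (upperTriangular2 F)) =
      {M : upperTriangular2 F |
        ∃ p : Polynomial F,
          (M : Matrix (Fin 2) (Fin 2) (Polynomial F)) = !![0, p; 0, 0]}) ∧
    ¬ ∃ S : Finset (upperTriangular2 F),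
        (S : Set (upperTriangular2 F)) ⊆
          (LieSubalgebra.lieSpan F (upperTriangular2 F)
            {x | ∃ a b : upperTriangular2 F, x = ⁅a, b⁆} : Set (upperTriangular2 F)) ∧
        LieSubalgebra.lieSpan F (upperTriangular2 F) (S : Set (upperTriangular2 F)) =
          LieSubalgebra.lieSpan F (upperTriangular2 F)
            {x | ∃ a b : upperTriangular2 F, x = ⁅a, b⁆} :=
  upperTriangular2_commutator_eq_and_not_fg_general F
end

section
/- Let R be a unital associative F-algebra with an idempotent e such that the two-sided ideal of R generated by e equals R and the two-sided ideal of R generated by 1−e equals R. Then the Lie algebra [R,R] (the Lie subalgebra of R⁽⁻⁾ generated by all commutators ab − ba, a,b ∈ R) is generated as a Lie algebra by the subset eR(1−e) ∪ (1−e)Re. -/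
/-!
Write `f = 1 - e`. Split `a` and `b` into diagonal parts `eae + faf` and off-diagonal parts
`eaf + fae`. A diagonal element commutes with `e`, so its bracket with an off-diagonal element is
again off-diagonal; hence only the brackets `⁅u, v⁆` of corner elements `u, v ∈ eRe` (and,
symmetrically, `fRf`) are not obviously in the Lie algebra `L` generated by `eRf ∪ fRe`.
For these, the additive map `t ↦ utv - vtu + t⁅u, v⁆` sends a product `pq` with `p ∈ eRf`,
`q ∈ fRe` to `⁅up, qv⁆ - ⁅vp, qu⁆ + ⁅p, q⁅u, v⁆⁆ ∈ L`, and sends `e` to `2⁅u, v⁆`.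
Since `RfR = R`, `e = e·1·e` is a sum of such products, so `2⁅u, v⁆ ∈ L`, and `2` is invertible.
-/

open Pointwise

attribute [local instance] LieRing.ofAssociativeRing

section Peirce

variable {R : Type*} [Ring R]

def peirceComponent (a b : R) : Set R := {x | ∃ r : R, x = a * r * b}

def peirceDiagonal (e r : R) : R := e * r * e + (1 - e) * r * (1 - e)

def peirceOffDiagonal (e r : R) : R := e * r * (1 - e) + (1 - e) * r * e

theorem mul_mem_peirceComponent {a b c x y : R} (hx : x ∈ peirceComponent a b)
    (hy : y ∈ peirceComponent b c) : x * y ∈ peirceComponent a c := by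
  obtain ⟨r, rfl⟩ := hx
  obtain ⟨s, rfl⟩ := hy
  exact ⟨r * b * b * s, by simp only [mul_assoc]⟩

theorem lie_mem_peirceComponent {a x y : R} (hx : x ∈ peirceComponent a a)
    (hy : y ∈ peirceComponent a a) : ⁅x, y⁆ ∈ peirceComponent a a := by
  obtain ⟨r, rfl⟩ := hx
  obtain ⟨s, rfl⟩ := hy
  exact ⟨r * a * a * s - s * a * a * r, by rw [Ring.lie_def]; noncomm_ring⟩

theorem IsIdempotentElem.mul_left_eq_of_mem_peirceComponent {a b x : R} (ha : IsIdempotentElem a)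
    (hx : x ∈ peirceComponent a b) : a * x = x := by
  obtain ⟨r, rfl⟩ := hx
  simp only [mul_assoc, ha.mul_self_mul]

theorem IsIdempotentElem.mul_right_eq_of_mem_peirceComponent {a b x : R} (hb : IsIdempotentElem b)
    (hx : x ∈ peirceComponent a b) : x * b = x := by
  obtain ⟨r, rfl⟩ := hx
  exact hb.mul_mul_self _

theorem lie_mul_mul_of_commute {d a b : R} (ha : Commute d a) (hb : Commute d b) (r : R) :
    ⁅d, a * r * b⁆ = a * ⁅d, r⁆ * b := by
  rw [Ring.lie_def, Ring.lie_def, ← mul_assoc d, ← mul_assoc d, ha.eq, mul_assoc (a * r),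
    hb.symm.eq]
  noncomm_ring

theorem lie_peirceOffDiagonal_of_commute {d e : R} (hd : Commute d e) (r : R) :
    ⁅d, peirceOffDiagonal e r⁆ = peirceOffDiagonal e ⁅d, r⁆ := by
  have hd' : Commute d (1 - e) := (Commute.one_right d).sub_right hd
  rw [peirceOffDiagonal, peirceOffDiagonal, lie_add, lie_mul_mul_of_commute hd hd',
    lie_mul_mul_of_commute hd' hd]

theorem lie_eq_peirce (e a b : R) :
    ⁅a, b⁆ = ⁅peirceDiagonal e a, peirceDiagonal e b⁆
      + ⁅peirceDiagonal e a, peirceOffDiagonal e b⁆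
      - ⁅peirceDiagonal e b, peirceOffDiagonal e a⁆
      + ⁅peirceOffDiagonal e a, peirceOffDiagonal e b⁆ := by
  simp only [peirceDiagonal, peirceOffDiagonal, Ring.lie_def]
  noncomm_ring

def twistedCommutator (u v : R) : R →+ R where
  toFun t := u * t * v - v * t * u + t * ⁅u, v⁆
  map_zero' := by simp
  map_add' s t := by noncomm_ring

theorem twistedCommutator_mul (u v p q : R) :
    twistedCommutator u v (p * q) = ⁅u * p, q * v⁆ - ⁅v * p, q * u⁆ + ⁅p, q * ⁅u, v⁆⁆ := by
  simp only [twistedCommutator, AddMonoidHom.coe_mk, ZeroHom.coe_mk, Ring.lie_def]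
  noncomm_ring

theorem IsIdempotentElem.twistedCommutator_self {a u v : R} (ha : IsIdempotentElem a)
    (hu : u ∈ peirceComponent a a) (hv : v ∈ peirceComponent a a) :
    twistedCommutator u v a = ⁅u, v⁆ + ⁅u, v⁆ := by
  simp only [twistedCommutator, AddMonoidHom.coe_mk, ZeroHom.coe_mk,
    ha.mul_right_eq_of_mem_peirceComponent hu, ha.mul_right_eq_of_mem_peirceComponent hv,
    ha.mul_left_eq_of_mem_peirceComponent (lie_mem_peirceComponent hu hv), ← Ring.lie_def]

theorem IsIdempotentElem.mem_addSubgroupClosure_peirceComponent_mul {a b : R}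
    (ha : IsIdempotentElem a) (hb : IsIdempotentElem b) (hspan : TwoSidedIdeal.span {b} = ⊤) :
    a ∈ AddSubgroup.closure (peirceComponent a b * peirceComponent b a) := by
  have hmem : a ∈ AddSubgroup.closure (Set.univ * {b} * Set.univ) := by
    rw [← TwoSidedIdeal.mem_span_iff_mem_addSubgroup_closure, hspan]
    trivial
  let sandwich : R →+ R := (AddMonoidHom.mulLeft a).comp (AddMonoidHom.mulRight a)
  have hsandwich : sandwich a = a := by simp [sandwich, ha.eq]
  have hmap := AddSubgroup.mem_map_of_mem sandwich hmem
  rw [AddMonoidHom.map_closure, hsandwich] at hmap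
  refine AddSubgroup.closure_mono ?_ hmap
  rintro _ ⟨_, ⟨_, ⟨x, -, c, hc, rfl⟩, y, -, rfl⟩, rfl⟩
  subst c
  exact ⟨a * x * b, ⟨x, rfl⟩, b * y * a, ⟨y, rfl⟩, by simp [sandwich, mul_assoc, hb.mul_self_mul]⟩

theorem twistedCommutator_mul_mem {F : Type*} [CommRing F] [Algebra F R] {a b u v p q : R}
    {L : LieSubalgebra F R} (hab : peirceComponent a b ⊆ L) (hba : peirceComponent b a ⊆ L)
    (hu : u ∈ peirceComponent a a) (hv : v ∈ peirceComponent a a)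
    (hp : p ∈ peirceComponent a b) (hq : q ∈ peirceComponent b a) :
    twistedCommutator u v (p * q) ∈ L := by
  rw [twistedCommutator_mul]
  refine add_mem (sub_mem ?_ ?_) ?_
  · exact L.lie_mem (hab (mul_mem_peirceComponent hu hp)) (hba (mul_mem_peirceComponent hq hv))
  · exact L.lie_mem (hab (mul_mem_peirceComponent hv hp)) (hba (mul_mem_peirceComponent hq hu))
  · exact L.lie_mem (hab hp) (hba (mul_mem_peirceComponent hq (lie_mem_peirceComponent hu hv)))

theorem lie_mem_of_peirceComponent_subset {F : Type*} [Field F] [Algebra F R] (hchar : (2 : F) ≠ 0)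
    {a b u v : R} (ha : IsIdempotentElem a) (hb : IsIdempotentElem b)
    (hspan : TwoSidedIdeal.span {b} = ⊤) {L : LieSubalgebra F R}
    (hab : peirceComponent a b ⊆ L) (hba : peirceComponent b a ⊆ L)
    (hu : u ∈ peirceComponent a a) (hv : v ∈ peirceComponent a a) : ⁅u, v⁆ ∈ L := by
  have hclosure : AddSubgroup.closure (peirceComponent a b * peirceComponent b a) ≤
      L.toSubmodule.toAddSubgroup.comap (twistedCommutator u v) := by
    rw [AddSubgroup.closure_le]
    rintro _ ⟨p, hp, q, hq, rfl⟩
    exact twistedCommutator_mul_mem hab hba hu hv hp hq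
  have htwo : (2 : F) • ⁅u, v⁆ ∈ L := by
    rw [two_smul, ← ha.twistedCommutator_self hu hv]
    exact hclosure (ha.mem_addSubgroupClosure_peirceComponent_mul hb hspan)
  exact (L.toSubmodule.smul_mem_iff hchar).1 htwo

namespace IsIdempotentElem

variable {e : R} (he : IsIdempotentElem e)
include he

theorem mul_one_sub_self_mul (x : R) : e * ((1 - e) * x) = 0 := by
  rw [← mul_assoc, he.mul_one_sub_self, zero_mul]

theorem one_sub_mul_self_mul (x : R) : (1 - e) * (e * x) = 0 := by
  rw [← mul_assoc, he.one_sub_mul_self, zero_mul]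

theorem lie_self_mul_mul_one_sub (r : R) : ⁅e, e * r * (1 - e)⁆ = e * r * (1 - e) := by
  simp only [Ring.lie_def, mul_assoc, he.mul_self_mul, he.one_sub_mul_self, mul_zero, sub_zero]

theorem lie_one_sub_mul_mul_self (r : R) : ⁅(1 - e) * r * e, e⁆ = (1 - e) * r * e := by
  simp only [Ring.lie_def, mul_assoc, he.eq, he.mul_one_sub_self_mul, sub_zero]

theorem commute_peirceDiagonal (r : R) : Commute (peirceDiagonal e r) e := by
  simp only [peirceDiagonal, Commute, SemiconjBy, mul_add, add_mul, mul_assoc, he.eq,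
    he.mul_self_mul, he.mul_one_sub_self_mul, he.one_sub_mul_self, mul_zero, add_zero]

theorem lie_peirceDiagonal (a b : R) :
    ⁅peirceDiagonal e a, peirceDiagonal e b⁆ =
      ⁅e * a * e, e * b * e⁆ + ⁅(1 - e) * a * (1 - e), (1 - e) * b * (1 - e)⁆ := by
  simp only [peirceDiagonal, Ring.lie_def, mul_add, add_mul, mul_assoc, he.mul_one_sub_self_mul,
    he.one_sub_mul_self_mul, mul_zero]
  abel

theorem lie_mem_of_lie_corner_mem {F : Type*} [CommRing F] [Algebra F R] {L : LieSubalgebra F R}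
    (h₁ : peirceComponent e (1 - e) ⊆ L) (h₂ : peirceComponent (1 - e) e ⊆ L)
    (hcorner₁ : ∀ x y : R, ⁅e * x * e, e * y * e⁆ ∈ L)
    (hcorner₂ : ∀ x y : R, ⁅(1 - e) * x * (1 - e), (1 - e) * y * (1 - e)⁆ ∈ L) (a b : R) :
    ⁅a, b⁆ ∈ L := by
  have hoff : ∀ r, peirceOffDiagonal e r ∈ L := fun r => add_mem (h₁ ⟨r, rfl⟩) (h₂ ⟨r, rfl⟩)
  have hdiag_off : ∀ r s, ⁅peirceDiagonal e r, peirceOffDiagonal e s⁆ ∈ L := fun r s => by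
    rw [lie_peirceOffDiagonal_of_commute (he.commute_peirceDiagonal r)]
    exact hoff _
  rw [lie_eq_peirce e, he.lie_peirceDiagonal]
  exact add_mem (sub_mem (add_mem (add_mem (hcorner₁ a b) (hcorner₂ a b)) (hdiag_off a b))
    (hdiag_off b a)) (L.lie_mem (hoff a) (hoff b))

end IsIdempotentElem

end Peirce

/-- **Lemma 1.**  If `R` is a unital associative `F`-algebra with an idempotent `e` such
that the two-sided ideals generated by `e` and by `1 - e` are both all of `R`, then the
Lie algebra `[R,R]` is generated as a Lie algebra by `eR(1-e) ∪ (1-e)Re`. -/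
theorem lie_commutator_generated_by_offdiagonal_peirce
    (F : Type*) [Field F] (hchar : (2 : F) ≠ 0)
    (R : Type*) [Ring R] [Algebra F R]
    (e : R) (he : e * e = e)
    (hIe : TwoSidedIdeal.span {e} = (⊤ : TwoSidedIdeal R))
    (hI1e : TwoSidedIdeal.span {1 - e} = (⊤ : TwoSidedIdeal R)) :
    LieSubalgebra.lieSpan F R
        ({x | ∃ r : R, x = e * r * (1 - e)} ∪ {x | ∃ r : R, x = (1 - e) * r * e}) =
      LieSubalgebra.lieSpan F R {x | ∃ a b : R, x = ⁅a, b⁆} := by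
  have he : IsIdempotentElem e := he
  refine le_antisymm (LieSubalgebra.lieSpan_mono ?_) (LieSubalgebra.lieSpan_le.2 ?_)
  · rintro _ (⟨r, rfl⟩ | ⟨r, rfl⟩)
    exacts [⟨_, _, (he.lie_self_mul_mul_one_sub r).symm⟩,
      ⟨_, _, (he.lie_one_sub_mul_mul_self r).symm⟩]
  · rintro _ ⟨a, b, rfl⟩
    set L := LieSubalgebra.lieSpan F R (peirceComponent e (1 - e) ∪ peirceComponent (1 - e) e)
    have h₁ : peirceComponent e (1 - e) ⊆ L :=
      Set.subset_union_left.trans (LieSubalgebra.subset_lieSpan (R := F))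
    have h₂ : peirceComponent (1 - e) e ⊆ L :=
      Set.subset_union_right.trans (LieSubalgebra.subset_lieSpan (R := F))
    have hcorner₁ : ∀ x y : R, ⁅e * x * e, e * y * e⁆ ∈ L := fun x y =>
      lie_mem_of_peirceComponent_subset hchar he he.one_sub hI1e h₁ h₂ ⟨x, rfl⟩ ⟨y, rfl⟩
    have hcorner₂ : ∀ x y : R, ⁅(1 - e) * x * (1 - e), (1 - e) * y * (1 - e)⁆ ∈ L := fun x y =>
      lie_mem_of_peirceComponent_subset hchar he.one_sub he hIe h₂ h₁ ⟨x, rfl⟩ ⟨y, rfl⟩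
    exact he.lie_mem_of_lie_corner_mem h₁ h₂ hcorner₁ hcorner₂ a b
end

section
/- Let R be a unital associative F-algebra with an idempotent e such that the two-sided ideal of R generated by 1−e equals R. Then every commutator [a,b] = ab − ba with a,b ∈ eRe lies in the F-linear span of the set of commutators {[u,v] : u ∈ eR(1−e), v ∈ (1−e)Re}. -/
section Aux

variable {R : Type*} [Ring R]

private lemma peirce_aux_id (e a' b' x y : R) (he : e * e = e) :
    (e*a'*e)*(x*(1-e)*y)*(e*b'*e) - (e*b'*e)*(x*(1-e)*y)*(e*a'*e)
      + ((e*a'*e)*(e*b'*e) - (e*b'*e)*(e*a'*e))*(x*(1-e)*y)*e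
    = ⁅(e*a'*e)*x*(1-e), (1-e)*y*(e*b'*e)⁆ - ⁅(e*b'*e)*x*(1-e), (1-e)*y*(e*a'*e)⁆
      + ⁅((e*a'*e)*(e*b'*e) - (e*b'*e)*(e*a'*e))*x*(1-e), (1-e)*y*e⁆ := by
  have hee : ∀ z : R, e*(e*z) = e*z := fun z => by rw [← mul_assoc, he]
  simp only [Ring.lie_def, sub_mul, mul_sub, one_mul, mul_one, mul_assoc, he, hee]
  abel

end Aux

/-- Every commutator of two elements of the Peirce component `eRe` lies in the `F`-linear
span of the commutators `[u,v]` with `u ∈ eR(1-e)` and `v ∈ (1-e)Re`, provided the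
two-sided ideal generated by `1 - e` is all of `R`. -/
theorem commutator_peirce_corner_mem_span
    (F : Type*) [Field F] (hchar : (2 : F) ≠ 0)
    (R : Type*) [Ring R] [Algebra F R]
    (e : R) (he : e * e = e)
    (hI1e : TwoSidedIdeal.span {1 - e} = (⊤ : TwoSidedIdeal R)) :
    ∀ a b : R, (∃ r : R, a = e * r * e) → (∃ r : R, b = e * r * e) →
      ⁅a, b⁆ ∈ Submodule.span F
        {x | ∃ u v : R, (∃ r : R, u = e * r * (1 - e)) ∧
          (∃ r : R, v = (1 - e) * r * e) ∧ x = ⁅u, v⁆} := by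
  rintro a b ⟨a', rfl⟩ ⟨b', rfl⟩
  set S : Submodule F R := Submodule.span F
        {x | ∃ u v : R, (∃ r : R, u = e * r * (1 - e)) ∧
          (∃ r : R, v = (1 - e) * r * e) ∧ x = ⁅u, v⁆} with hS
  have hee : ∀ z : R, e * (e * z) = e * z := fun z => by rw [← mul_assoc, he]
  -- the key fact: the defining predicate holds for 1 - e
  have key : ∀ x y : R,
      (e*a'*e) * (x * (1-e) * y) * (e*b'*e) - (e*b'*e) * (x * (1-e) * y) * (e*a'*e)
        + ((e*a'*e)*(e*b'*e) - (e*b'*e)*(e*a'*e)) * (x * (1-e) * y) * e ∈ S := by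
    intro x y
    have h1 : ⁅(e*a'*e)*x*(1-e), (1-e)*y*(e*b'*e)⁆ ∈ S :=
      Submodule.subset_span ⟨_, _, ⟨a' * e * x, by noncomm_ring⟩,
        ⟨y * e * b', by noncomm_ring⟩, rfl⟩
    have h2 : ⁅(e*b'*e)*x*(1-e), (1-e)*y*(e*a'*e)⁆ ∈ S :=
      Submodule.subset_span ⟨_, _, ⟨b' * e * x, by noncomm_ring⟩,
        ⟨y * e * a', by noncomm_ring⟩, rfl⟩
    have h3 : ⁅((e*a'*e)*(e*b'*e) - (e*b'*e)*(e*a'*e))*x*(1-e), (1-e)*y*e⁆ ∈ S := by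
      refine Submodule.subset_span ⟨_, _, ⟨(a' * e * b' - b' * e * a') * e * x, ?_⟩,
        ⟨y, by noncomm_ring⟩, rfl⟩
      simp only [sub_mul, mul_sub, mul_assoc, he, hee]
    rw [peirce_aux_id e a' b' x y he]
    exact S.add_mem (S.sub_mem h1 h2) h3
  -- the two-sided ideal of elements r satisfying the predicate for all x, y
  let K : TwoSidedIdeal R := TwoSidedIdeal.mk'
    {r : R | ∀ x y : R,
      (e*a'*e) * (x * r * y) * (e*b'*e) - (e*b'*e) * (x * r * y) * (e*a'*e)
        + ((e*a'*e)*(e*b'*e) - (e*b'*e)*(e*a'*e)) * (x * r * y) * e ∈ S}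
    (fun x y => by simpa only [zero_mul, mul_zero, sub_zero, add_zero] using S.zero_mem)
    (fun {r s} hr hs x y => by
      have := S.add_mem (hr x y) (hs x y)
      convert this using 1
      noncomm_ring)
    (fun {r} hr x y => by
      have := S.neg_mem (hr x y)
      convert this using 1
      noncomm_ring)
    (fun {u r} hr x y => by
      have hxy : x * (u * r) * y = (x * u) * r * y := by noncomm_ring
      rw [hxy]; exact hr (x * u) y)
    (fun {r u} hr x y => by
      have hxy : x * (r * u) * y = x * r * (u * y) := by noncomm_ring
      rw [hxy]; exact hr x (u * y))
  have hfK : (1 - e) ∈ K := (TwoSidedIdeal.mem_mk' _ _ _ _ _ _ (1 - e)).mpr key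
  have heK : e ∈ K := by
    have hesp : e ∈ TwoSidedIdeal.span ({1 - e} : Set R) := by
      rw [hI1e]; trivial
    exact TwoSidedIdeal.mem_span_iff.mp hesp K (Set.singleton_subset_iff.mpr hfK)
  have hP : (e*a'*e) * (1 * e * 1) * (e*b'*e) - (e*b'*e) * (1 * e * 1) * (e*a'*e)
        + ((e*a'*e)*(e*b'*e) - (e*b'*e)*(e*a'*e)) * (1 * e * 1) * e ∈ S :=
    (TwoSidedIdeal.mem_mk' _ _ _ _ _ _ e).mp heK 1 1
  have h2 : (e*a'*e) * (1 * e * 1) * (e*b'*e) - (e*b'*e) * (1 * e * 1) * (e*a'*e)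
        + ((e*a'*e)*(e*b'*e) - (e*b'*e)*(e*a'*e)) * (1 * e * 1) * e
      = (2 : F) • ⁅e*a'*e, e*b'*e⁆ := by
    rw [two_smul, Ring.lie_def]
    simp only [sub_mul, mul_sub, one_mul, mul_one, mul_assoc, he, hee]
    try abel
  rw [h2] at hP
  have := S.smul_mem ((2 : F)⁻¹) hP
  rwa [smul_smul, inv_mul_cancel₀ hchar, one_smul] at this
end

section
/- Let R be a finitely generated unital associative F-algebra and let e, f ∈ R be idempotents such that the two-sided ideal of R generated by e equals R and the two-sided ideal of R generated by f equals R. Then the associative pair (eRf, fRe) is finitely generated: there exist finite subsets S ⊆ eRf and T ⊆ fRe such that for every pair of F-subspaces V ⊆ eRf and W ⊆ fRe with S ⊆ V, T ⊆ W, V·W·V ⊆ V, and W·V·W ⊆ W, one has V = eRf and W = fRe. -/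
/-!
Choose expressions `1 = ∑ aᵢ e bᵢ` and `1 = ∑ cⱼ f dⱼ` and a finite generating set `G ∋ 1` of `R`
containing all `aᵢ, bᵢ, cⱼ, dⱼ`; take `S = e G³ f` and `T = f G³ e`. Inserting both expressions
for `1` and using idempotency,
`e x m f = ∑ (e x cⱼ f) (f dⱼ aᵢ e) (e bᵢ m f)`.
For `x` a product of two generators and `m` a product of `p + 1` generators, the outer factors
involve products of only `3` and `p + 2` generators, so by induction on `p` any subpair containing
`(S, T)` contains `e w f` and `f w e` for every product `w` of generators; these span `R`.
-/

open scoped Pointwise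

theorem TwoSidedIdeal.exists_sum_mul_mul_eq_of_mem_span_singleton {R : Type*} [Ring R]
    {e x : R} (hx : x ∈ TwoSidedIdeal.span {e}) :
    ∃ (n : ℕ) (a b : Fin n → R), ∑ i, a i * e * b i = x := by
  let I : TwoSidedIdeal R := .mk' {x | ∃ (n : ℕ) (a b : Fin n → R), ∑ i, a i * e * b i = x}
    ⟨0, ![], ![], by simp⟩
    (by
      rintro _ _ ⟨n, a, b, rfl⟩ ⟨k, c, d, rfl⟩
      exact ⟨n + k, Fin.append a c, Fin.append b d, by simp [Fin.sum_univ_add]⟩)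
    (by
      rintro _ ⟨n, a, b, rfl⟩
      exact ⟨n, -a, b, by simp⟩)
    (by
      rintro r _ ⟨n, a, b, rfl⟩
      exact ⟨n, (r * a ·), b, by simp [Finset.mul_sum, mul_assoc]⟩)
    (by
      rintro _ r ⟨n, a, b, rfl⟩
      exact ⟨n, a, (b · * r), by simp [Finset.sum_mul, mul_assoc]⟩)
  have heI : {e} ⊆ (I : Set R) := by
    simpa [I] using ⟨1, ![1], ![1], by simp⟩
  simpa [I] using TwoSidedIdeal.mem_span_iff.1 hx I heI

theorem Algebra.adjoin_toSubmodule_eq_iSup_span_pow {F R : Type*} [CommSemiring F] [Semiring R]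
    [Algebra F R] (s : Set R) :
    Subalgebra.toSubmodule (Algebra.adjoin F s) = ⨆ n, Submodule.span F s ^ n := by
  refine le_antisymm ?_ (iSup_le fun n => ?_)
  · have hmul : (⨆ n, Submodule.span F s ^ n) * (⨆ n, Submodule.span F s ^ n)
        ≤ ⨆ n, Submodule.span F s ^ n := by
      simp only [Submodule.iSup_mul, Submodule.mul_iSup, ← pow_add]
      exact iSup_le fun n => iSup_le fun m => le_iSup (Submodule.span F s ^ ·) _
    rw [Algebra.adjoin_eq_span, Submodule.span_le]
    intro x hx
    induction hx using Submonoid.closure_induction with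
    | mem x hx => exact Submodule.mem_iSup_of_mem 1 (by simpa using Submodule.subset_span hx)
    | one => exact Submodule.mem_iSup_of_mem 0 (Submodule.one_le.1 (pow_zero _).ge)
    | mul x y _ _ hx hy => exact hmul (Submodule.mul_mem_mul hx hy)
  · induction n with
    | zero => simp [← Algebra.toSubmodule_bot]
    | succ n ih =>
      rw [pow_succ, ← (Subalgebra.isIdempotentElem_toSubmodule _).eq]
      exact mul_le_mul' ih (Submodule.span_le.2 Algebra.subset_adjoin)

theorem Submodule.span_pow_le_comap_of_image_subset {F R N : Type*} [CommSemiring F]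
    [Semiring R] [Algebra F R] [AddCommMonoid N] [Module F N] [DecidableEq R] [DecidableEq N]
    {G : Finset R}
    {n : ℕ} {φ : R →ₗ[F] N} {V : Submodule F N} (h : ((G ^ n).image φ : Set N) ⊆ V) :
    Submodule.span F (G : Set R) ^ n ≤ V.comap φ := by
  rw [Submodule.span_pow, ← Finset.coe_pow, Submodule.span_le]
  exact fun x hx => h (Finset.mem_image_of_mem _ hx)

section Peirce

variable {F R : Type*} [CommSemiring F] [Semiring R] [Algebra F R] {e f : R}

theorem mul_mul_mem_of_sum_eq_one {σ : Type*} [SetLike σ R] [AddSubmonoidClass σ R]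
    {V : σ} {W : Set R} (hVWV : ∀ v ∈ V, ∀ w ∈ W, ∀ v' ∈ V, v * w * v' ∈ V)
    (he : IsIdempotentElem e) (hf : IsIdempotentElem f) {n k : ℕ} {a b : Fin n → R}
    {c d : Fin k → R} (hab : ∑ i, a i * e * b i = 1) (hcd : ∑ j, c j * f * d j = 1) {x m : R}
    (hx : ∀ j, e * (x * c j) * f ∈ V) (hda : ∀ j i, f * (d j * a i) * e ∈ W)
    (hm : ∀ i, e * (b i * m) * f ∈ V) : e * (x * m) * f ∈ V := by
  have hexpand : e * (x * m) * f
      = ∑ j, ∑ i, e * (x * c j) * f * (f * (d j * a i) * e) * (e * (b i * m) * f) := by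
    have he' : ∀ r, e * (e * r) = e * r := fun r => by rw [← mul_assoc, he.eq]
    have hf' : ∀ r, f * (f * r) = f * r := fun r => by rw [← mul_assoc, hf.eq]
    calc e * (x * m) * f = e * x * (∑ j, c j * f * d j) * (∑ i, a i * e * b i) * m * f := by
          rw [hab, hcd, mul_one, mul_one]
          simp only [mul_assoc]
      _ = _ := by
          simp only [Finset.mul_sum, Finset.sum_mul, mul_assoc, he', hf']
          exact Finset.sum_comm
  rw [hexpand]
  exact sum_mem fun j _ => sum_mem fun i _ => hVWV _ (hx j) _ (hda j i) _ (hm i)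

theorem pow_le_comap_mulLeftRight {M V W : Submodule F R} (hM : 1 ∈ M)
    (hVWV : ∀ v ∈ V, ∀ w ∈ W, ∀ v' ∈ V, v * w * v' ∈ V)
    (he : IsIdempotentElem e) (hf : IsIdempotentElem f) {n k : ℕ} {a b : Fin n → R}
    {c d : Fin k → R} (habM : ∀ i, a i ∈ M ∧ b i ∈ M) (hcdM : ∀ j, c j ∈ M ∧ d j ∈ M)
    (hab : ∑ i, a i * e * b i = 1) (hcd : ∑ j, c j * f * d j = 1)
    (hV : M ^ 3 ≤ V.comap (LinearMap.mulLeftRight F (e, f)))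
    (hW : M ^ 3 ≤ W.comap (LinearMap.mulLeftRight F (f, e))) (p : ℕ) :
    M ^ p ≤ V.comap (LinearMap.mulLeftRight F (e, f)) := by
  have hmono : ∀ {p q : ℕ}, p ≤ q → M ^ p ≤ M ^ q :=
    pow_le_pow_right' (Submodule.one_le.2 hM)
  have hshift : ∀ q, M ^ (q + 2) ≤ V.comap (LinearMap.mulLeftRight F (e, f)) := by
    intro q
    induction q with
    | zero => exact (hmono (by norm_num)).trans hV
    | succ q ih =>
      rw [show q + 1 + 2 = 2 + (q + 1) by omega, pow_add, Submodule.mul_le]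
      intro x hx y hy
      refine mul_mul_mem_of_sum_eq_one hVWV he hf hab hcd (fun j => hV ?_) (fun j i => hW ?_)
        (fun i => ih ?_)
      · exact pow_succ M 2 ▸ Submodule.mul_mem_mul hx (hcdM j).1
      · refine hmono (by norm_num : 2 ≤ 3) ?_
        exact pow_two M ▸ Submodule.mul_mem_mul (hcdM j).2 (habM i).1
      · exact pow_succ' M (q + 1) ▸ Submodule.mul_mem_mul (habM i).2 hy
  exact (hmono (Nat.le_add_right p 2)).trans (hshift p)

end Peirce

theorem associative_pair_peirce_fg_general
    (F : Type*) [Field F]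
    (R : Type*) [Ring R] [Algebra F R]
    (hfg : ∃ s : Finset R, Algebra.adjoin F (s : Set R) = ⊤)
    (e f : R) (he : e * e = e) (hf : f * f = f)
    (hIe : TwoSidedIdeal.span {e} = (⊤ : TwoSidedIdeal R))
    (hIf : TwoSidedIdeal.span {f} = (⊤ : TwoSidedIdeal R)) :
    ∃ (S T : Finset R),
      (S : Set R) ⊆ {x | ∃ r : R, x = e * r * f} ∧
      (T : Set R) ⊆ {x | ∃ r : R, x = f * r * e} ∧
      ∀ V W : Submodule F R,
        (V : Set R) ⊆ {x | ∃ r : R, x = e * r * f} →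
        (W : Set R) ⊆ {x | ∃ r : R, x = f * r * e} →
        (S : Set R) ⊆ (V : Set R) → (T : Set R) ⊆ (W : Set R) →
        (∀ v ∈ V, ∀ w ∈ W, ∀ v' ∈ V, v * w * v' ∈ V) →
        (∀ w ∈ W, ∀ v ∈ V, ∀ w' ∈ W, w * v * w' ∈ W) →
        (V : Set R) = {x | ∃ r : R, x = e * r * f} ∧
          (W : Set R) = {x | ∃ r : R, x = f * r * e} := by
  classical
  obtain ⟨s, hs⟩ := hfg
  obtain ⟨n, a, b, hab⟩ :=
    TwoSidedIdeal.exists_sum_mul_mul_eq_of_mem_span_singleton (e := e) (x := 1) (by simp [hIe])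
  obtain ⟨k, c, d, hcd⟩ :=
    TwoSidedIdeal.exists_sum_mul_mul_eq_of_mem_span_singleton (e := f) (x := 1) (by simp [hIf])
  set G : Finset R := insert 1 (s ∪ Finset.univ.image a ∪ Finset.univ.image b ∪
    Finset.univ.image c ∪ Finset.univ.image d)
  set M := Submodule.span F (G : Set R)
  have hGM : ∀ {x}, x ∈ G → x ∈ M := fun hx => Submodule.subset_span hx
  have habM : ∀ i, a i ∈ M ∧ b i ∈ M := fun i => ⟨hGM (by simp [G]), hGM (by simp [G])⟩
  have hcdM : ∀ j, c j ∈ M ∧ d j ∈ M := fun j => ⟨hGM (by simp [G]), hGM (by simp [G])⟩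
  have hM : ∀ r, r ∈ ⨆ p, M ^ p := by
    intro r
    rw [← Algebra.adjoin_toSubmodule_eq_iSup_span_pow, Subalgebra.mem_toSubmodule]
    exact Algebra.adjoin_mono (s := s) (fun x hx => by simp [G, hx]) (by simp [hs])
  refine ⟨(G ^ 3).image (LinearMap.mulLeftRight F (e, f)),
    (G ^ 3).image (LinearMap.mulLeftRight F (f, e)), ?_, ?_,
    fun V W hVe hWf hSV hTW hVWV hWVW => ?_⟩
  · rw [Finset.coe_image]; rintro _ ⟨x, -, rfl⟩; exact ⟨x, rfl⟩
  · rw [Finset.coe_image]; rintro _ ⟨x, -, rfl⟩; exact ⟨x, rfl⟩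
  have hV3 := Submodule.span_pow_le_comap_of_image_subset hSV
  have hW3 := Submodule.span_pow_le_comap_of_image_subset hTW
  have hV := pow_le_comap_mulLeftRight (hGM (by simp [G])) hVWV he hf habM hcdM hab hcd hV3 hW3
  have hW := pow_le_comap_mulLeftRight (hGM (by simp [G])) hWVW hf he hcdM habM hcd hab hW3 hV3
  exact ⟨hVe.antisymm (by rintro _ ⟨r, rfl⟩; exact iSup_le hV (hM r)),
    hWf.antisymm (by rintro _ ⟨r, rfl⟩; exact iSup_le hW (hM r))⟩

/-- **Lemma 2.**  Let `R` be a finitely generated unital associative `F`-algebra and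
`e, f` idempotents whose two-sided ideals are all of `R`.  Then the associative pair
`(eRf, fRe)` is finitely generated: there are finite subsets `S ⊆ eRf`, `T ⊆ fRe` such
that the only subpair of `F`-subspaces containing them is `(eRf, fRe)` itself. -/
theorem associative_pair_peirce_fg
    (F : Type*) [Field F] (hchar : (2 : F) ≠ 0)
    (R : Type*) [Ring R] [Algebra F R]
    (hfg : ∃ s : Finset R, Algebra.adjoin F (s : Set R) = ⊤)
    (e f : R) (he : e * e = e) (hf : f * f = f)
    (hIe : TwoSidedIdeal.span {e} = (⊤ : TwoSidedIdeal R))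
    (hIf : TwoSidedIdeal.span {f} = (⊤ : TwoSidedIdeal R)) :
    ∃ (S T : Finset R),
      (S : Set R) ⊆ {x | ∃ r : R, x = e * r * f} ∧
      (T : Set R) ⊆ {x | ∃ r : R, x = f * r * e} ∧
      ∀ V W : Submodule F R,
        (V : Set R) ⊆ {x | ∃ r : R, x = e * r * f} →
        (W : Set R) ⊆ {x | ∃ r : R, x = f * r * e} →
        (S : Set R) ⊆ (V : Set R) → (T : Set R) ⊆ (W : Set R) →
        (∀ v ∈ V, ∀ w ∈ W, ∀ v' ∈ V, v * w * v' ∈ V) →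
        (∀ w ∈ W, ∀ v ∈ V, ∀ w' ∈ W, w * v * w' ∈ W) →
        (V : Set R) = {x | ∃ r : R, x = e * r * f} ∧
          (W : Set R) = {x | ∃ r : R, x = f * r * e} :=
  associative_pair_peirce_fg_general F R hfg e f he hf hIe hIf
end

section
/- Let R be a unital associative F-algebra and let e, f ∈ R be idempotents. Suppose the associative pair (eRf, fRe) is finitely generated, i.e. there exist finite subsets S ⊆ eRf and T ⊆ fRe such that every pair of F-subspaces V ⊆ eRf, W ⊆ fRe with S ⊆ V, T ⊆ W, V·W·V ⊆ V, W·V·W ⊆ W satisfies V = eRf, W = fRe. Then the associated Jordan pair is finitely generated: there exist finite subsets S′ ⊆ eRf and T′ ⊆ fRe such that every pair of F-subspaces V ⊆ eRf, W ⊆ fRe with S′ ⊆ V, T′ ⊆ W that is closed under the Jordan triple products (i.e. a b c + c b a ∈ V for all a,c ∈ V, b ∈ W, and b a b′ + b′ a b ∈ W for all b,b′ ∈ W, a ∈ V) satisfies V = eRf, W = fRe. -/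
namespace JPfgAux

variable {R : Type*} [Ring R]

/-- Alternating words: entries at positions of parity `n` lie in `S`, others in `T`. -/
inductive Alt (S T : Set R) : ℕ → List R → Prop
  | nil (n : ℕ) : Alt S T n []
  | cons {n : ℕ} {a : R} {l : List R} :
      (if n % 2 = 0 then a ∈ S else a ∈ T) → Alt S T (n + 1) l → Alt S T n (a :: l)

lemma alt_shift {S T : Set R} : ∀ {l : List R} {n m : ℕ},
    Alt S T n l → n % 2 = m % 2 → Alt S T m l := by
  intro l
  induction l with
  | nil => intro n m _ _; exact Alt.nil m
  | cons a l ih =>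
    intro n m h hnm
    cases h with
    | cons ha h' =>
      refine Alt.cons ?_ (ih h' (by omega))
      rwa [← hnm]

lemma alt_swap {S T : Set R} : ∀ {l : List R} {n : ℕ},
    Alt S T n l → Alt T S (n + 1) l := by
  intro l
  induction l with
  | nil => intro n _; exact Alt.nil _
  | cons a l ih =>
    intro n h
    cases h with
    | cons ha h' =>
      refine Alt.cons ?_ (ih h')
      by_cases hn : n % 2 = 0
      · rw [if_pos hn] at ha; rw [if_neg (by omega)]; exact ha
      · rw [if_neg hn] at ha; rw [if_pos (by omega)]; exact ha

lemma alt_append {S T : Set R} : ∀ {x y : List R} {n : ℕ},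
    Alt S T n x → Alt S T (n + x.length) y → Alt S T n (x ++ y) := by
  intro x
  induction x with
  | nil => intro y n _ hy; simpa using hy
  | cons a x ih =>
    intro y n hx hy
    cases hx with
    | cons ha hx' =>
      refine Alt.cons ha (ih hx' ?_)
      have h : n + (a :: x).length = n + 1 + x.length := by
        simp only [List.length_cons]; omega
      rwa [h] at hy

lemma alt_of_append {S T : Set R} : ∀ {x y : List R} {n : ℕ},
    Alt S T n (x ++ y) → Alt S T n x ∧ Alt S T (n + x.length) y := by
  intro x
  induction x with
  | nil => intro y n h; exact ⟨Alt.nil _, by simpa using h⟩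
  | cons a x ih =>
    intro y n h
    cases h with
    | cons ha h' =>
      obtain ⟨h1, h2⟩ := ih h'
      refine ⟨Alt.cons ha h1, ?_⟩
      have h : n + (a :: x).length = n + 1 + x.length := by
        simp only [List.length_cons]; omega
      rwa [h]

/-- even-position elements of a list -/
def ev : List R → List R
  | [] => []
  | [a] => [a]
  | a :: _ :: l => a :: ev l

lemma ev_spec {S T : Set R} : ∀ (k : ℕ) (l : List R) (n : ℕ), l.length = 2 * k + 1 →
    Alt S T n l → n % 2 = 0 → (ev l).length = k + 1 ∧ ∀ x ∈ ev l, x ∈ S := by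
  intro k
  induction k with
  | zero =>
    intro l n hlen h hn
    match l, hlen with
    | [a], _ =>
      cases h with
      | cons ha _ =>
        rw [if_pos hn] at ha
        exact ⟨rfl, by simpa [ev] using ha⟩
  | succ k ih =>
    intro l n hlen h hn
    match l, hlen with
    | a :: b :: l'', hlen =>
      cases h with
      | cons ha h' =>
        cases h' with
        | cons hb h'' =>
          rw [if_pos hn] at ha
          have hlen'' : l''.length = 2 * k + 1 := by
            simp only [List.length_cons] at hlen; omega
          obtain ⟨h1, h2⟩ := ih l'' (n + 2) hlen'' h'' (by omega)
          refine ⟨by simp [ev, h1], ?_⟩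
          intro x hx
          simp only [ev, List.mem_cons] at hx
          rcases hx with rfl | hx
          · exact ha
          · exact h2 x hx

lemma dup_decomp : ∀ (L : List R), ¬ L.Nodup →
    ∃ (A : List R) (s : R) (B C : List R), L = A ++ s :: (B ++ s :: C) := by
  intro L
  induction L with
  | nil => intro h; exact absurd List.nodup_nil h
  | cons x L ih =>
    intro h
    by_cases hx : x ∈ L
    · obtain ⟨B, C, rfl⟩ := List.append_of_mem hx
      exact ⟨[], x, B, C, rfl⟩
    · have : ¬ L.Nodup := by
        intro hL; exact h (List.nodup_cons.mpr ⟨hx, hL⟩)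
      obtain ⟨A, s, B, C, rfl⟩ := ih this
      exact ⟨x :: A, s, B, C, rfl⟩

lemma ev_split1 : ∀ (B : List R) (l : List R) (s : R) (C : List R),
    ev l = B ++ s :: C → ∃ β γ, l = β ++ s :: γ ∧ β.length = 2 * B.length := by
  intro B
  induction B with
  | nil =>
    intro l s C h
    match l with
    | [] => simp [ev] at h
    | [a] =>
      simp only [ev, List.nil_append] at h
      obtain ⟨rfl, _⟩ : a = s ∧ C = [] := by
        constructor <;> [exact (List.cons.injEq _ _ _ _ ▸ h).1; exact (List.cons.injEq _ _ _ _ ▸ h).2.symm]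
      exact ⟨[], [], rfl, by simp⟩
    | a :: b :: l' =>
      simp only [ev, List.nil_append, List.cons.injEq] at h
      exact ⟨[], b :: l', by simp [h.1], by simp⟩
  | cons x B' ih =>
    intro l s C h
    match l with
    | [] => simp [ev] at h
    | [a] =>
      simp only [ev, List.cons_append, List.cons.injEq] at h
      exact absurd h.2 (by simp)
    | a :: b :: l' =>
      simp only [ev, List.cons_append, List.cons.injEq] at h
      obtain ⟨β', γ, rfl, hlen⟩ := ih l' s C h.2
      exact ⟨a :: b :: β', γ, rfl, by simp [hlen]; omega⟩

lemma ev_split2 : ∀ (A : List R) (l : List R) (s : R) (B C : List R),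
    ev l = A ++ s :: (B ++ s :: C) →
    ∃ α β γ, l = α ++ s :: (β ++ s :: γ) ∧ α.length = 2 * A.length ∧
      β.length = 2 * B.length + 1 := by
  intro A
  induction A with
  | nil =>
    intro l s B C h
    match l with
    | [] => simp [ev] at h
    | [a] =>
      simp only [ev, List.nil_append, List.cons.injEq] at h
      exact absurd h.2 (by simp)
    | a :: b :: l' =>
      simp only [ev, List.nil_append, List.cons.injEq] at h
      obtain ⟨β, γ, rfl, hlen⟩ := ev_split1 B l' s C h.2
      refine ⟨[], b :: β, γ, by simp [h.1], by simp, by simp [hlen]⟩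
  | cons x A' ih =>
    intro l s B C h
    match l with
    | [] => simp [ev] at h
    | [a] =>
      simp only [ev, List.cons_append, List.cons.injEq] at h
      exact absurd h.2 (by simp)
    | a :: b :: l' =>
      simp only [ev, List.cons_append, List.cons.injEq] at h
      obtain ⟨α', β, γ, rfl, hlα, hlβ⟩ := ih l' s B C h.2
      exact ⟨a :: b :: α', β, γ, rfl, by simp [hlα]; omega, hlβ⟩

/-- generator finsets: products of alternating words of size `2m+1` -/
def Pfin (A B : Finset R) [DecidableEq R] : ℕ → Finset R
  | 0 => A
  | (m + 1) => ((A ×ˢ B) ×ˢ Pfin A B m).image fun p => p.1.1 * (p.1.2 * p.2)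

lemma word_to_Pfin {A B : Finset R} [DecidableEq R] :
    ∀ (m : ℕ) (l : List R), Alt (↑A) (↑B) 0 l → l.length = 2 * m + 1 →
      l.prod ∈ Pfin A B m := by
  intro m
  induction m with
  | zero =>
    intro l h hlen
    match l, hlen with
    | [a], _ =>
      cases h with
      | cons ha _ =>
        rw [if_pos (by omega)] at ha
        simpa [Pfin] using ha
  | succ m ih =>
    intro l h hlen
    match l, hlen with
    | a :: b :: l'', hlen =>
      cases h with
      | cons ha h' =>
        cases h' with
        | cons hb h'' =>
          rw [if_pos (by omega)] at ha
          rw [if_neg (by omega)] at hb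
          have hlen'' : l''.length = 2 * m + 1 := by
            simp only [List.length_cons] at hlen; omega
          have hmem := ih l'' (alt_shift h'' (by omega)) hlen''
          simp only [Pfin, Finset.mem_image]
          refine ⟨((a, b), l''.prod), ?_, by simp [List.prod_cons]⟩
          simp only [Finset.mem_product]
          exact ⟨⟨ha, hb⟩, hmem⟩

lemma Pfin_ef {A B : Finset R} [DecidableEq R] (u v : R)
    (hA : ∀ a ∈ A, u * a = a ∧ a * v = a) :
    ∀ (m : ℕ), ∀ x ∈ Pfin A B m, u * x = x ∧ x * v = x := by
  intro m
  induction m with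
  | zero => intro x hx; exact hA x hx
  | succ m ih =>
    intro x hx
    simp only [Pfin, Finset.mem_image] at hx
    obtain ⟨⟨⟨a, b⟩, y⟩, hmem, rfl⟩ := hx
    simp only [Finset.mem_product] at hmem
    obtain ⟨⟨haA, _⟩, hy⟩ := hmem
    constructor
    · rw [← mul_assoc, (hA a haA).1]
    · rw [mul_assoc, mul_assoc, (ih y hy).2]

end JPfgAux

open JPfgAux in
/-- Master lemma: all alternating monomials lie in any Jordan-closed pair containing
the short monomials. -/
lemma jpfg_master {F : Type*} [Field F] (hchar : (2 : F) ≠ 0)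
    {R : Type*} [Ring R] [Algebra F R] [DecidableEq R] :
    ∀ (n : ℕ) (S T : Finset R) (V W : Submodule F R),
    (∀ a ∈ V, ∀ b ∈ W, ∀ c ∈ V, a * b * c + c * b * a ∈ V) →
    (∀ b ∈ W, ∀ a ∈ V, ∀ b' ∈ W, b * a * b' + b' * a * b ∈ W) →
    (∀ l : List R, Alt (↑S) (↑T) 0 l → l.length % 2 = 1 →
      l.length ≤ 2 * (S.card + T.card) + 1 → l.prod ∈ V) →
    (∀ l : List R, Alt (↑T) (↑S) 0 l → l.length % 2 = 1 →
      l.length ≤ 2 * (S.card + T.card) + 1 → l.prod ∈ W) →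
    ∀ l : List R, Alt (↑S) (↑T) 0 l → l.length % 2 = 1 → l.length ≤ n → l.prod ∈ V := by
  intro n
  induction n using Nat.strong_induction_on with
  | _ n ih =>
  intro S T V W hJV hJW hshort hshort' l hAlt hOdd hlen
  by_cases hsh : l.length ≤ 2 * (S.card + T.card) + 1
  · exact hshort l hAlt hOdd hsh
  push_neg at hsh
  set nl := l.length with hnl
  -- induction hypotheses specialised
  have hIHV : ∀ l' : List R, Alt (↑S) (↑T) 0 l' → l'.length % 2 = 1 →
      l'.length < nl → l'.prod ∈ V := by
    intro l' h1 h2 h3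
    exact ih l'.length (by omega) S T V W hJV hJW hshort hshort' l' h1 h2 le_rfl
  have hIHW : ∀ u : List R, Alt (↑S) (↑T) 1 u → u.length % 2 = 1 →
      u.length < nl → u.prod ∈ W := by
    intro u h1 h2 h3
    have h1' : Alt (↑T) (↑S) 0 u := alt_shift (alt_swap h1) (by omega)
    exact ih u.length (by omega) T S W V hJW hJV
      (fun l h1 h2 h3 => hshort' l h1 h2 (by omega))
      (fun l h1 h2 h3 => hshort l h1 h2 (by omega)) u h1' h2 le_rfl
  -- elementwise Jordan helpers
  have swapV : ∀ {a b c : R}, a ∈ V → b ∈ W → c ∈ V → c * (b * a) ∈ V →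
      a * (b * c) ∈ V := by
    intro a b c ha hb hc h
    have h1 := hJV a ha b hb c hc
    have h2 : a * (b * c) = (a * b * c + c * b * a) - c * (b * a) := by
      rw [mul_assoc a b c, mul_assoc c b a]; abel
    rw [h2]; exact sub_mem h1 h
  have sqV : ∀ {a b : R}, a ∈ V → b ∈ W → a * (b * a) ∈ V := by
    intro a b ha hb
    have h1 := hJV a ha b hb a ha
    have h2 : (2 : F) • (a * (b * a)) ∈ V := by
      rw [two_smul]
      simpa [mul_assoc] using h1
    have h3 := V.smul_mem (2 : F)⁻¹ h2
    rwa [smul_smul, inv_mul_cancel₀ hchar, one_smul] at h3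
  -- pigeonhole: find a repeated S-letter
  obtain ⟨k, hk⟩ : ∃ k, nl = 2 * k + 1 := ⟨nl / 2, by omega⟩
  obtain ⟨hevlen, hevmem⟩ := ev_spec k l 0 (by omega) hAlt (by omega)
  have hnodup : ¬ (ev l).Nodup := by
    intro hnd
    have h1 : (ev l).toFinset ⊆ S := by
      intro x hx
      rw [List.mem_toFinset] at hx
      exact hevmem x hx
    have h2 : (ev l).toFinset.card = k + 1 := by
      rw [List.toFinset_card_of_nodup hnd, hevlen]
    have h3 := Finset.card_le_card h1
    omega
  obtain ⟨A, s, Bv, C, hevdec⟩ := dup_decomp _ hnodup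
  obtain ⟨α, β, γ, hled, hlenα, hlenβ⟩ := ev_split2 A l s Bv C hevdec
  -- split up the alternation structure
  rw [hled] at hAlt
  obtain ⟨hα, hrest⟩ := alt_of_append hAlt
  have hrest' := hrest
  cases hrest' with
  | cons hsS hrest2 =>
  rw [if_pos (by omega)] at hsS
  obtain ⟨hβ0, hrest3⟩ := alt_of_append hrest2
  have hβ1 : Alt (↑S) (↑T) 1 β := alt_shift hβ0 (by omega)
  cases hrest3 with
  | cons hs2 hγ0 =>
  have hγ1 : Alt (↑S) (↑T) 1 γ := alt_shift hγ0 (by omega)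
  have hltot : nl = α.length + β.length + γ.length + 2 := by
    rw [hnl, hled]
    simp only [List.length_append, List.length_cons]
    omega
  have hβodd : β.length % 2 = 1 := by omega
  have hγev : γ.length % 2 = 0 := by omega
  have hsV : s ∈ V := by
    have := hshort [s] (Alt.cons (by rw [if_pos (by omega)]; exact hsS) (Alt.nil 1))
      (by simp) (by simp only [List.length_cons, List.length_nil]; omega)
    simpa using this
  -- key: handle words of the shape  s :: (β ++ s :: g)  of total length nl
  have key : ∀ g : List R, Alt (↑S) (↑T) 1 g → g.length % 2 = 0 →
      β.length + g.length + 2 = nl → (s :: (β ++ s :: g)).prod ∈ V := by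
    intro g hg hgE hglen
    cases g with
    | nil =>
      have hb : β.prod ∈ W := hIHW β hβ1 hβodd (by omega)
      have := sqV hsV hb
      simpa [List.prod_cons, List.prod_append, mul_assoc] using this
    | cons t' γ' =>
      cases hg with
      | cons ht'T hγ'0 =>
      rw [if_neg (by omega)] at ht'T
      have hγ'len : γ'.length % 2 = 1 := by
        simp only [List.length_cons] at hgE; omega
      have hglen' : β.length + γ'.length + 3 = nl := by
        simp only [List.length_cons] at hglen; omega
      have ht'W : t' ∈ W := by
        have := hIHW [t'] (Alt.cons (by rw [if_neg (by omega)]; exact ht'T) (Alt.nil 2))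
          (by simp) (by simp only [List.length_cons, List.length_nil]; omega)
        simpa using this
      have hγ'A : Alt (↑S) (↑T) 0 γ' := alt_shift hγ'0 (by omega)
      have hC : γ'.prod ∈ V := hIHV γ' hγ'A hγ'len (by omega)
      have hUalt : Alt (↑S) (↑T) 1 (β ++ ([s] ++ [t'])) := by
        refine alt_append hβ1 ?_
        refine Alt.cons (by rw [if_pos (by omega)]; exact hsS) ?_
        exact Alt.cons (by rw [if_neg (by omega)]; exact ht'T) (Alt.nil _)
      have hU : (β ++ ([s] ++ [t'])).prod ∈ W := by
        refine hIHW _ hUalt ?_ ?_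
        · simp only [List.length_append, List.length_cons, List.length_nil]; omega
        · simp only [List.length_append, List.length_cons, List.length_nil]; omega
      have hxalt : Alt (↑S) (↑T) 0 (γ' ++ (β ++ [s])) := by
        refine alt_append hγ'A ?_
        refine alt_shift (n := 1) ?_ (by omega)
        refine alt_append hβ1 ?_
        exact Alt.cons (by rw [if_pos (by omega)]; exact hsS) (Alt.nil _)
      have hx : (γ' ++ (β ++ [s])).prod ∈ V := by
        refine hIHV _ hxalt ?_ ?_
        · simp only [List.length_append, List.length_cons, List.length_nil]; omega
        · simp only [List.length_append, List.length_cons, List.length_nil]; omega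
      have hmalt : Alt (↑S) (↑T) 1 (t' :: (γ' ++ β)) := by
        refine Alt.cons (by rw [if_neg (by omega)]; exact ht'T) ?_
        refine alt_shift (n := 0) ?_ (by omega)
        exact alt_append hγ'A (alt_shift hβ1 (by omega))
      have hm : (t' :: (γ' ++ β)).prod ∈ W := by
        refine hIHW _ hmalt ?_ ?_
        · simp only [List.length_append, List.length_cons]; omega
        · simp only [List.length_append, List.length_cons]; omega
      -- the chain of swaps
      have h5 : s * ((t' :: (γ' ++ β)).prod * s) ∈ V := sqV hsV hm
      have h4 : (γ' ++ (β ++ [s])).prod * (t' * s) ∈ V := by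
        refine swapV hx ht'W hsV ?_
        simpa [List.prod_cons, List.prod_append, mul_assoc] using h5
      have h3 : s * ((β ++ ([s] ++ [t'])).prod * γ'.prod) ∈ V := by
        refine swapV hsV hU hC ?_
        simpa [List.prod_cons, List.prod_append, mul_assoc] using h4
      simpa [List.prod_cons, List.prod_append, mul_assoc] using h3
  -- now dispatch on whether α is empty
  rcases List.eq_nil_or_concat α with hα0 | ⟨α', t, hαc⟩
  · subst hα0
    have hltot2 : nl = β.length + γ.length + 2 := by
      simp only [List.length_nil] at hltot; omega
    have hgoal := key γ hγ1 hγev (by omega)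
    rw [hled]
    simpa using hgoal
  · rw [List.concat_eq_append] at hαc
    subst hαc
    have hltot2 : nl = α'.length + β.length + γ.length + 3 := by
      simp only [List.length_append, List.length_cons, List.length_nil] at hltot
      omega
    have hα'odd : α'.length % 2 = 1 := by
      simp only [List.length_append, List.length_cons, List.length_nil] at hlenα
      omega
    obtain ⟨hα'A, ht0⟩ := alt_of_append hα
    have htT : t ∈ (↑T : Set R) := by
      cases ht0 with
      | cons htc _ =>
        rwa [if_neg (by omega)] at htc
    have hα'V : α'.prod ∈ V := by
      refine hIHV α' hα'A hα'odd ?_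
      omega
    have htW : t ∈ W := by
      have := hIHW [t] (Alt.cons (by rw [if_neg (by omega)]; exact htT) (Alt.nil 2))
        (by simp) (by simp only [List.length_cons, List.length_nil]; omega)
      simpa using this
    have hρalt : Alt (↑S) (↑T) 0 (s :: (β ++ s :: γ)) := by
      refine alt_shift (m := 0) hrest (by omega)
    have hρ : (s :: (β ++ s :: γ)).prod ∈ V := by
      refine hIHV _ hρalt ?_ ?_
      · simp only [List.length_append, List.length_cons]; omega
      · simp only [List.length_append, List.length_cons]; omega
    have hgalt : Alt (↑S) (↑T) 1 (γ ++ ([t] ++ α')) := by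
      refine alt_append hγ1 ?_
      refine Alt.cons (by rw [if_neg (by omega)]; exact htT) ?_
      exact alt_shift hα'A (by omega)
    have h8 : (s :: (β ++ s :: (γ ++ ([t] ++ α')))).prod ∈ V := by
      refine key _ hgalt ?_ ?_
      · simp only [List.length_append, List.length_cons, List.length_nil]
        omega
      · simp only [List.length_append, List.length_cons, List.length_nil]
        omega
    have h7 : α'.prod * (t * (s :: (β ++ s :: γ)).prod) ∈ V := by
      refine swapV hα'V htW hρ ?_
      simpa [List.prod_cons, List.prod_append, mul_assoc] using h8
    rw [hled]
    simpa [List.prod_cons, List.prod_append, mul_assoc] using h7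

open JPfgAux in
/-- **Lemma 3.**  Let `R` be a unital associative `F`-algebra and `e, f` idempotents.
If the associative pair `(eRf, fRe)` is finitely generated, then so is the associated
Jordan pair with triple products `{a,b,c} = abc + cba`. -/
theorem jordan_pair_of_associative_pair_fg
    (F : Type*) [Field F] (hchar : (2 : F) ≠ 0)
    (R : Type*) [Ring R] [Algebra F R]
    (e f : R) (he : e * e = e) (hf : f * f = f)
    (hassoc : ∃ (S T : Finset R),
      (S : Set R) ⊆ {x | ∃ r : R, x = e * r * f} ∧
      (T : Set R) ⊆ {x | ∃ r : R, x = f * r * e} ∧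
      ∀ V W : Submodule F R,
        (V : Set R) ⊆ {x | ∃ r : R, x = e * r * f} →
        (W : Set R) ⊆ {x | ∃ r : R, x = f * r * e} →
        (S : Set R) ⊆ (V : Set R) → (T : Set R) ⊆ (W : Set R) →
        (∀ v ∈ V, ∀ w ∈ W, ∀ v' ∈ V, v * w * v' ∈ V) →
        (∀ w ∈ W, ∀ v ∈ V, ∀ w' ∈ W, w * v * w' ∈ W) →
        (V : Set R) = {x | ∃ r : R, x = e * r * f} ∧
          (W : Set R) = {x | ∃ r : R, x = f * r * e}) :
    ∃ (S' T' : Finset R),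
      (S' : Set R) ⊆ {x | ∃ r : R, x = e * r * f} ∧
      (T' : Set R) ⊆ {x | ∃ r : R, x = f * r * e} ∧
      ∀ V W : Submodule F R,
        (V : Set R) ⊆ {x | ∃ r : R, x = e * r * f} →
        (W : Set R) ⊆ {x | ∃ r : R, x = f * r * e} →
        (S' : Set R) ⊆ (V : Set R) → (T' : Set R) ⊆ (W : Set R) →
        (∀ a ∈ V, ∀ b ∈ W, ∀ c ∈ V, a * b * c + c * b * a ∈ V) →
        (∀ b ∈ W, ∀ a ∈ V, ∀ b' ∈ W, b * a * b' + b' * a * b ∈ W) →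
        (V : Set R) = {x | ∃ r : R, x = e * r * f} ∧
          (W : Set R) = {x | ∃ r : R, x = f * r * e} := by
  classical
  obtain ⟨S, T, hS, hT, hmain⟩ := hassoc
  set K := S.card + T.card with hK
  -- basic Peirce facts for the generators
  have hSe : ∀ a ∈ S, e * a = a ∧ a * f = a := by
    intro a ha
    obtain ⟨r, rfl⟩ := hS ha
    constructor
    · rw [← mul_assoc, ← mul_assoc, he]
    · rw [mul_assoc, hf]
  have hTf : ∀ b ∈ T, f * b = b ∧ b * e = b := by
    intro b hb
    obtain ⟨r, rfl⟩ := hT hb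
    constructor
    · rw [← mul_assoc, ← mul_assoc, hf]
    · rw [mul_assoc, he]
  refine ⟨(Finset.range (K + 1)).biUnion (Pfin S T),
          (Finset.range (K + 1)).biUnion (Pfin T S), ?_, ?_, ?_⟩
  · intro x hx
    simp only [Finset.coe_biUnion, Finset.mem_coe, Finset.mem_range, Set.mem_iUnion,
      Finset.mem_biUnion] at hx
    obtain ⟨m, _, hxm⟩ := hx
    have h1 := Pfin_ef e f hSe m x hxm
    exact ⟨x, by rw [h1.1, h1.2]⟩
  · intro x hx
    simp only [Finset.coe_biUnion, Finset.mem_coe, Finset.mem_range, Set.mem_iUnion,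
      Finset.mem_biUnion] at hx
    obtain ⟨m, _, hxm⟩ := hx
    have h1 := Pfin_ef f e hTf m x hxm
    exact ⟨x, by rw [h1.1, h1.2]⟩
  · intro V W hVE hWF hS'V hT'W hJV hJW
    -- short words lie in V resp. W
    have hshortV : ∀ l : List R, Alt (↑S) (↑T) 0 l → l.length % 2 = 1 →
        l.length ≤ 2 * (S.card + T.card) + 1 → l.prod ∈ V := by
      intro l h1 h2 h3
      obtain ⟨m, hm⟩ : ∃ m, l.length = 2 * m + 1 := ⟨l.length / 2, by omega⟩
      have h4 := word_to_Pfin m l h1 hm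
      apply hS'V
      exact Finset.mem_coe.mpr (Finset.mem_biUnion.mpr
        ⟨m, Finset.mem_range.mpr (by omega), h4⟩)
    have hshortW : ∀ l : List R, Alt (↑T) (↑S) 0 l → l.length % 2 = 1 →
        l.length ≤ 2 * (S.card + T.card) + 1 → l.prod ∈ W := by
      intro l h1 h2 h3
      obtain ⟨m, hm⟩ : ∃ m, l.length = 2 * m + 1 := ⟨l.length / 2, by omega⟩
      have h4 := word_to_Pfin m l h1 hm
      apply hT'W
      exact Finset.mem_coe.mpr (Finset.mem_biUnion.mpr
        ⟨m, Finset.mem_range.mpr (by omega), h4⟩)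
    -- all alternating words lie in V resp. W
    have hwordsV : ∀ l : List R, Alt (↑S) (↑T) 0 l → l.length % 2 = 1 → l.prod ∈ V :=
      fun l h1 h2 =>
        jpfg_master hchar l.length S T V W hJV hJW hshortV hshortW l h1 h2 le_rfl
    have hwordsW : ∀ l : List R, Alt (↑T) (↑S) 0 l → l.length % 2 = 1 → l.prod ∈ W :=
      fun l h1 h2 =>
        jpfg_master hchar l.length T S W V hJW hJV
          (fun l h1 h2 h3 => hshortW l h1 h2 (by omega))
          (fun l h1 h2 h3 => hshortV l h1 h2 (by omega)) l h1 h2 le_rfl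
    -- spans of all words form an associatively closed pair
    set sV : Set R := {x | ∃ l : List R, Alt (↑S) (↑T) 0 l ∧ l.length % 2 = 1 ∧ x = l.prod}
      with hsV
    set sW : Set R := {x | ∃ l : List R, Alt (↑T) (↑S) 0 l ∧ l.length % 2 = 1 ∧ x = l.prod}
      with hsW
    set X := Submodule.span F sV with hX
    set Y := Submodule.span F sW with hY
    -- Peirce sets as submodules
    have hXE : (X : Set R) ⊆ {x | ∃ r : R, x = e * r * f} := by
      have hESub : ∀ x ∈ sV, e * x = x ∧ x * f = x := by
        rintro x ⟨l, h1, h2, rfl⟩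
        obtain ⟨m, hm⟩ : ∃ m, l.length = 2 * m + 1 := ⟨l.length / 2, by omega⟩
        exact Pfin_ef e f hSe m _ (word_to_Pfin m l h1 hm)
      let Esub : Submodule F R :=
        { carrier := {x | e * x = x ∧ x * f = x}
          add_mem' := by
            rintro a b ⟨ha1, ha2⟩ ⟨hb1, hb2⟩
            constructor
            · rw [mul_add, ha1, hb1]
            · rw [add_mul, ha2, hb2]
          zero_mem' := by simp
          smul_mem' := by
            rintro c x ⟨h1, h2⟩
            constructor
            · rw [mul_smul_comm, h1]
            · rw [smul_mul_assoc, h2] }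
      have hle : X ≤ Esub := Submodule.span_le.mpr hESub
      intro x hx
      obtain ⟨h1, h2⟩ := hle hx
      exact ⟨x, by rw [h1, h2]⟩
    have hYF : (Y : Set R) ⊆ {x | ∃ r : R, x = f * r * e} := by
      have hFSub : ∀ x ∈ sW, f * x = x ∧ x * e = x := by
        rintro x ⟨l, h1, h2, rfl⟩
        obtain ⟨m, hm⟩ : ∃ m, l.length = 2 * m + 1 := ⟨l.length / 2, by omega⟩
        exact Pfin_ef f e hTf m _ (word_to_Pfin m l h1 hm)
      let Fsub : Submodule F R :=
        { carrier := {x | f * x = x ∧ x * e = x}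
          add_mem' := by
            rintro a b ⟨ha1, ha2⟩ ⟨hb1, hb2⟩
            constructor
            · rw [mul_add, ha1, hb1]
            · rw [add_mul, ha2, hb2]
          zero_mem' := by simp
          smul_mem' := by
            rintro c x ⟨h1, h2⟩
            constructor
            · rw [mul_smul_comm, h1]
            · rw [smul_mul_assoc, h2] }
      have hle : Y ≤ Fsub := Submodule.span_le.mpr hFSub
      intro x hx
      obtain ⟨h1, h2⟩ := hle hx
      exact ⟨x, by rw [h1, h2]⟩
    have hSX : (S : Set R) ⊆ (X : Set R) := by
      intro a ha
      apply Submodule.subset_span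
      exact ⟨[a], Alt.cons (by rw [if_pos (by omega)]; exact ha) (Alt.nil 1),
        by simp, by simp⟩
    have hTY : (T : Set R) ⊆ (Y : Set R) := by
      intro b hb
      apply Submodule.subset_span
      exact ⟨[b], Alt.cons (by rw [if_pos (by omega)]; exact hb) (Alt.nil 1),
        by simp, by simp⟩
    -- associative closure of the pair (X, Y)
    have hmul1 : ∀ v ∈ X, ∀ w ∈ Y, ∀ v' ∈ X, v * w * v' ∈ X := by
      have hXYX : X * Y * X ≤ X := by
        rw [hX, hY, Submodule.span_mul_span, Submodule.span_mul_span]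
        apply Submodule.span_le.mpr
        rintro x hx
        rw [Set.mem_mul] at hx
        obtain ⟨xy, hxy, z, hz, rfl⟩ := hx
        rw [Set.mem_mul] at hxy
        obtain ⟨x', hx', y', hy', rfl⟩ := hxy
        obtain ⟨l1, ha1, hp1, rfl⟩ := hx'
        obtain ⟨l2, ha2, hp2, rfl⟩ := hy'
        obtain ⟨l3, ha3, hp3, rfl⟩ := hz
        apply Submodule.subset_span
        refine ⟨l1 ++ (l2 ++ l3), ?_, ?_, ?_⟩
        · refine alt_append ha1 ?_
          refine alt_append (alt_shift (alt_swap ha2) (by omega)) ?_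
          refine alt_shift ha3 (by omega)
        · simp only [List.length_append]; omega
        · rw [List.prod_append, List.prod_append, mul_assoc]
      intro v hv w hw v' hv'
      exact hXYX (Submodule.mul_mem_mul (Submodule.mul_mem_mul hv hw) hv')
    have hmul2 : ∀ w ∈ Y, ∀ v ∈ X, ∀ w' ∈ Y, w * v * w' ∈ Y := by
      have hYXY : Y * X * Y ≤ Y := by
        rw [hX, hY, Submodule.span_mul_span, Submodule.span_mul_span]
        apply Submodule.span_le.mpr
        rintro x hx
        rw [Set.mem_mul] at hx
        obtain ⟨xy, hxy, z, hz, rfl⟩ := hx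
        rw [Set.mem_mul] at hxy
        obtain ⟨x', hx', y', hy', rfl⟩ := hxy
        obtain ⟨l1, ha1, hp1, rfl⟩ := hx'
        obtain ⟨l2, ha2, hp2, rfl⟩ := hy'
        obtain ⟨l3, ha3, hp3, rfl⟩ := hz
        apply Submodule.subset_span
        refine ⟨l1 ++ (l2 ++ l3), ?_, ?_, ?_⟩
        · refine alt_append ha1 ?_
          refine alt_append (alt_shift (alt_swap ha2) (by omega)) ?_
          refine alt_shift ha3 (by omega)
        · simp only [List.length_append]; omega
        · rw [List.prod_append, List.prod_append, mul_assoc]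
      intro w hw v hv w' hw'
      exact hYXY (Submodule.mul_mem_mul (Submodule.mul_mem_mul hw hv) hw')
    obtain ⟨hXeq, hYeq⟩ := hmain X Y hXE hYF hSX hTY hmul1 hmul2
    constructor
    · refine Set.Subset.antisymm hVE ?_
      rw [← hXeq]
      intro x hx
      refine Submodule.span_le.mpr ?_ hx
      rintro y ⟨l, h1, h2, rfl⟩
      exact hwordsV l h1 h2
    · refine Set.Subset.antisymm hWF ?_
      rw [← hYeq]
      intro x hx
      refine Submodule.span_le.mpr ?_ hx
      rintro y ⟨l, h1, h2, rfl⟩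
      exact hwordsW l h1 h2
end

section
/- Let R be a finitely generated unital associative F-algebra with an involution *, containing an idempotent e with ee* = e*e = 0 such that the two-sided ideal of R generated by e equals R and the two-sided ideal of R generated by s = 1 − e − e* equals R. With K₁ = K ∩ (e*Rs + sRe), K₂ = K ∩ e*Re, H₁ = H ∩ (e*Rs + sRe), H₂ = H ∩ e*Re, and symmetrically K₋₁ = K ∩ (eRs + sRe*), K₋₂ = K ∩ eRe*, H₋₂ = H ∩ eRe*: one has K₂ = spanF{[k,k′] : k,k′ ∈ K₁}, H₂ = spanF{k² : k ∈ K₁}, K₋₂ = spanF{[k,k′] : k,k′ ∈ K₋₁}, and H₋₂ = spanF{k² : k ∈ K₋₁}. -/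
theorem aux_deg_two {F : Type*} [Field F] (hchar : (2 : F) ≠ 0)
    {R : Type*} [Ring R] [Algebra F R]
    (st : R →ₗ[F] R)
    (hst_mul : ∀ a b : R, st (a * b) = st b * st a)
    (hst_inv : ∀ a : R, st (st a) = a)
    (f g s : R) (hfg : st f = g) (hgf : st g = f) (hsts : st s = s)
    (hss : s * s = s) (hsf : s * f = 0) (hgs : g * s = 0) (hgf0 : g * f = 0)
    (hone : (1 : R) ∈ Submodule.span F {x : R | ∃ a b : R, x = a * s * b}) :
    ({a : R | st a = -a ∧ ∃ r : R, a = f * r * g} =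
      ↑(Submodule.span F {x : R | ∃ k k' : R,
        (st k = -k ∧ ∃ r₁ r₂ : R, k = f * r₁ * s + s * r₂ * g) ∧
        (st k' = -k' ∧ ∃ r₁ r₂ : R, k' = f * r₁ * s + s * r₂ * g) ∧
        x = ⁅k, k'⁆})) ∧
    ({a : R | st a = a ∧ ∃ r : R, a = f * r * g} =
      ↑(Submodule.span F {x : R | ∃ k : R,
        (st k = -k ∧ ∃ r₁ r₂ : R, k = f * r₁ * s + s * r₂ * g) ∧
        x = k * k})) := by
  -- derived rewriting lemmas
  have hss' : ∀ x : R, s * (s * x) = s * x := fun x => by rw [← mul_assoc, hss]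
  have hsf' : ∀ x : R, s * (f * x) = 0 := fun x => by rw [← mul_assoc, hsf, zero_mul]
  have hgs' : ∀ x : R, g * (s * x) = 0 := fun x => by rw [← mul_assoc, hgs, zero_mul]
  have hgf0' : ∀ x : R, g * (f * x) = 0 := fun x => by rw [← mul_assoc, hgf0, zero_mul]
  -- the "P" predicate set
  set T : Set R := {x : R | ∃ a b : R, x = f * a * s * b * g} with hT
  -- step 1 : every f*r*g lies in span F T
  have hmem : ∀ r : R, f * r * g ∈ Submodule.span F T := by
    intro r
    set φ : R →ₗ[F] R := (LinearMap.mulRight F g).comp (LinearMap.mulLeft F (f * r)) with hφ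
    have key : Submodule.span F {x : R | ∃ a b : R, x = a * s * b} ≤
        (Submodule.span F T).comap φ := by
      rw [Submodule.span_le]
      rintro x ⟨a, b, rfl⟩
      refine Submodule.subset_span ⟨r * a, b, ?_⟩
      simp only [hφ, LinearMap.comp_apply, LinearMap.mulLeft_apply, LinearMap.mulRight_apply]
      noncomm_ring
    have h1 := key hone
    simpa only [hφ, Submodule.mem_comap, LinearMap.comp_apply, LinearMap.mulLeft_apply,
      LinearMap.mulRight_apply, mul_one] using h1
  -- P-membership of the basic skew elements
  have hP1 : ∀ a : R, st (f * a * s - s * st a * g) = -(f * a * s - s * st a * g) := by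
    intro a
    simp only [map_sub, hst_mul, hfg, hgf, hsts, hst_inv, neg_sub]
    rw [mul_assoc, mul_assoc]
  have hP1' : ∀ a : R, f * a * s - s * st a * g = f * a * s + s * (-st a) * g := by
    intro a; simp [sub_eq_add_neg, neg_mul, mul_neg]
  have hP2 : ∀ b : R, st (s * b * g - f * st b * s) = -(s * b * g - f * st b * s) := by
    intro b
    simp only [map_sub, hst_mul, hfg, hgf, hsts, hst_inv, neg_sub]
    rw [mul_assoc, mul_assoc]
  have hP2' : ∀ b : R, s * b * g - f * st b * s = f * (-st b) * s + s * b * g := by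
    intro b; simp [sub_eq_add_neg, neg_mul, mul_neg]; abel
  constructor
  · -- K₂ part
    set S : Set R := {x : R | ∃ k k' : R,
        (st k = -k ∧ ∃ r₁ r₂ : R, k = f * r₁ * s + s * r₂ * g) ∧
        (st k' = -k' ∧ ∃ r₁ r₂ : R, k' = f * r₁ * s + s * r₂ * g) ∧
        x = ⁅k, k'⁆} with hS
    apply Set.Subset.antisymm
    · -- LHS ⊆ span S
      rintro a ⟨ha, r, rfl⟩
      set L : R →ₗ[F] R := LinearMap.id - st with hL
      have key : Submodule.span F T ≤ (Submodule.span F S).comap L := by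
        rw [Submodule.span_le]
        rintro x ⟨a, b, rfl⟩
        refine Submodule.subset_span ?_
        refine ⟨f * a * s - s * st a * g, s * b * g - f * st b * s,
          ⟨hP1 a, a, -st a, hP1' a⟩, ⟨hP2 b, -st b, b, hP2' b⟩, ?_⟩
        simp only [hL, LinearMap.sub_apply, LinearMap.id_apply, Ring.lie_def]
        simp only [hst_mul, hfg, hgf, hsts, hst_inv]
        simp only [mul_sub, sub_mul, mul_assoc, hss', hsf', hgs', hgf0',
          mul_zero, zero_mul, sub_zero, zero_sub, neg_neg, neg_zero, add_zero, zero_add]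
      have h1 : L (f * r * g) ∈ Submodule.span F S := key (hmem r)
      have h2 : L (f * r * g) = (2 : F) • (f * r * g) := by
        simp only [hL, LinearMap.sub_apply, LinearMap.id_apply, ha, sub_neg_eq_add, two_smul]
      rw [h2] at h1
      have h3 := Submodule.smul_mem (Submodule.span F S) (2⁻¹ : F) h1
      rwa [smul_smul, inv_mul_cancel₀ hchar, one_smul] at h3
    · -- span S ⊆ LHS
      set K2 : Submodule F R :=
        { carrier := {a : R | st a = -a ∧ ∃ r : R, a = f * r * g}
          zero_mem' := ⟨by simp, 0, by simp⟩
          add_mem' := by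
            rintro x y ⟨hx, rx, rfl⟩ ⟨hy, ry, rfl⟩
            exact ⟨by rw [map_add, hx, hy, neg_add], rx + ry, by
              simp [mul_add, add_mul]⟩
          smul_mem' := by
            rintro c x ⟨hx, rx, rfl⟩
            exact ⟨by rw [map_smul, hx, smul_neg], c • rx, by
              simp [mul_smul_comm, smul_mul_assoc]⟩ } with hK2
      have key : Submodule.span F S ≤ K2 := by
        rw [Submodule.span_le]
        rintro x ⟨k, k', ⟨hk, r₁, r₂, rfl⟩, ⟨hk', r₁', r₂', rfl⟩, rfl⟩
        constructor
        · rw [Ring.lie_def, map_sub, hst_mul, hst_mul, hk, hk', neg_mul_neg, neg_mul_neg,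
            neg_sub]
        · refine ⟨r₁ * (s * r₂') - r₁' * (s * r₂), ?_⟩
          rw [Ring.lie_def]
          simp only [mul_sub, sub_mul, mul_add, add_mul, mul_assoc, hss', hsf', hgs', hgf0',
            mul_zero, zero_mul, sub_zero, zero_sub, add_zero, zero_add, neg_neg, neg_zero]
      intro x hx
      exact key hx
  · -- H₂ part
    set S : Set R := {x : R | ∃ k : R,
        (st k = -k ∧ ∃ r₁ r₂ : R, k = f * r₁ * s + s * r₂ * g) ∧
        x = k * k} with hS
    apply Set.Subset.antisymm
    · rintro a ⟨ha, r, rfl⟩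
      set L : R →ₗ[F] R := LinearMap.id + st with hL
      have key : Submodule.span F T ≤ (Submodule.span F S).comap L := by
        rw [Submodule.span_le]
        rintro x ⟨a, b, rfl⟩
        have hkk : f * a * s - s * st a * g + (s * b * g - f * st b * s)
            = f * (a - st b) * s + s * (b - st a) * g := by
          simp only [mul_sub, sub_mul]; abel
        have m1 : (f * a * s - s * st a * g + (s * b * g - f * st b * s)) *
            (f * a * s - s * st a * g + (s * b * g - f * st b * s)) ∈
            Submodule.span F S :=
          Submodule.subset_span ⟨_, ⟨by rw [map_add, hP1 a, hP2 b, neg_add],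
            a - st b, b - st a, hkk⟩, rfl⟩
        have m2 : (f * a * s - s * st a * g) * (f * a * s - s * st a * g) ∈
            Submodule.span F S :=
          Submodule.subset_span ⟨_, ⟨hP1 a, a, -st a, hP1' a⟩, rfl⟩
        have m3 : (s * b * g - f * st b * s) * (s * b * g - f * st b * s) ∈
            Submodule.span F S :=
          Submodule.subset_span ⟨_, ⟨hP2 b, -st b, b, hP2' b⟩, rfl⟩
        have hsum := Submodule.sub_mem _ (Submodule.sub_mem _ m1 m2) m3
        refine Submodule.mem_comap.mpr ?_
        have heq : L (f * a * s * b * g) =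
            (f * a * s - s * st a * g + (s * b * g - f * st b * s)) *
              (f * a * s - s * st a * g + (s * b * g - f * st b * s)) -
            (f * a * s - s * st a * g) * (f * a * s - s * st a * g) -
            (s * b * g - f * st b * s) * (s * b * g - f * st b * s) := by
          simp only [hL, LinearMap.add_apply, LinearMap.id_apply]
          simp only [hst_mul, hfg, hgf, hsts, hst_inv]
          simp only [mul_sub, sub_mul, mul_add, add_mul, mul_assoc, hss', hsf', hgs', hgf0',
            mul_zero, zero_mul, sub_zero, zero_sub, add_zero, zero_add, neg_neg, neg_zero]
          abel
        rw [heq]; exact hsum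
      have h1 : L (f * r * g) ∈ Submodule.span F S := key (hmem r)
      have h2 : L (f * r * g) = (2 : F) • (f * r * g) := by
        simp only [hL, LinearMap.add_apply, LinearMap.id_apply, ha, two_smul]
      rw [h2] at h1
      have h3 := Submodule.smul_mem (Submodule.span F S) (2⁻¹ : F) h1
      rwa [smul_smul, inv_mul_cancel₀ hchar, one_smul] at h3
    · set H2 : Submodule F R :=
        { carrier := {a : R | st a = a ∧ ∃ r : R, a = f * r * g}
          zero_mem' := ⟨by simp, 0, by simp⟩
          add_mem' := by
            rintro x y ⟨hx, rx, rfl⟩ ⟨hy, ry, rfl⟩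
            exact ⟨by rw [map_add, hx, hy], rx + ry, by simp [mul_add, add_mul]⟩
          smul_mem' := by
            rintro c x ⟨hx, rx, rfl⟩
            exact ⟨by rw [map_smul, hx], c • rx, by
              simp [mul_smul_comm, smul_mul_assoc]⟩ } with hH2
      have key : Submodule.span F S ≤ H2 := by
        rw [Submodule.span_le]
        rintro x ⟨k, ⟨hk, r₁, r₂, rfl⟩, rfl⟩
        constructor
        · rw [hst_mul, hk, neg_mul_neg]
        · refine ⟨r₁ * (s * r₂), ?_⟩
          simp only [mul_add, add_mul, mul_assoc, hss', hsf', hgs', hgf0',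
            mul_zero, zero_mul, add_zero, zero_add]
      intro x hx
      exact key hx

/-- **Lemma 4.**  With the `ℤ`-grading coming from an idempotent `e` with
`e e* = e* e = 0` and `s = 1 - e - e*` in a finitely generated algebra `R` with
`ReR = RsR = R`:  `K₂ = span {[k,k'] : k,k' ∈ K₁}`, `H₂ = span {k² : k ∈ K₁}`,
`K₋₂ = span {[k,k'] : k,k' ∈ K₋₁}` and `H₋₂ = span {k² : k ∈ K₋₁}`. -/
theorem skew_and_symm_degree_two_components
    (F : Type*) [Field F] (hchar : (2 : F) ≠ 0)
    (R : Type*) [Ring R] [Algebra F R]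
    (hfg : ∃ s : Finset R, Algebra.adjoin F (s : Set R) = ⊤)
    (st : R →ₗ[F] R)
    (hst_mul : ∀ a b : R, st (a * b) = st b * st a)
    (hst_inv : ∀ a : R, st (st a) = a)
    (e : R) (he : e * e = e)
    (hee : e * st e = 0) (hee' : st e * e = 0)
    (hIe : TwoSidedIdeal.span {e} = (⊤ : TwoSidedIdeal R))
    (hIs : TwoSidedIdeal.span {1 - e - st e} = (⊤ : TwoSidedIdeal R)) :
    -- K₂ = span_F {[k,k'] : k, k' ∈ K₁}
    ({a : R | st a = -a ∧ ∃ r : R, a = st e * r * e} =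
      ↑(Submodule.span F {x : R | ∃ k k' : R,
        (st k = -k ∧ ∃ r₁ r₂ : R, k = st e * r₁ * (1 - e - st e) + (1 - e - st e) * r₂ * e) ∧
        (st k' = -k' ∧ ∃ r₁ r₂ : R, k' = st e * r₁ * (1 - e - st e) + (1 - e - st e) * r₂ * e) ∧
        x = ⁅k, k'⁆})) ∧
    -- H₂ = span_F {k² : k ∈ K₁}
    ({a : R | st a = a ∧ ∃ r : R, a = st e * r * e} =
      ↑(Submodule.span F {x : R | ∃ k : R,
        (st k = -k ∧ ∃ r₁ r₂ : R, k = st e * r₁ * (1 - e - st e) + (1 - e - st e) * r₂ * e) ∧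
        x = k * k})) ∧
    -- K₋₂ = span_F {[k,k'] : k, k' ∈ K₋₁}
    ({a : R | st a = -a ∧ ∃ r : R, a = e * r * st e} =
      ↑(Submodule.span F {x : R | ∃ k k' : R,
        (st k = -k ∧ ∃ r₁ r₂ : R, k = e * r₁ * (1 - e - st e) + (1 - e - st e) * r₂ * st e) ∧
        (st k' = -k' ∧ ∃ r₁ r₂ : R, k' = e * r₁ * (1 - e - st e) + (1 - e - st e) * r₂ * st e) ∧
        x = ⁅k, k'⁆})) ∧
    -- H₋₂ = span_F {k² : k ∈ K₋₁}
    ({a : R | st a = a ∧ ∃ r : R, a = e * r * st e} =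
      ↑(Submodule.span F {x : R | ∃ k : R,
        (st k = -k ∧ ∃ r₁ r₂ : R, k = e * r₁ * (1 - e - st e) + (1 - e - st e) * r₂ * st e) ∧
        x = k * k})) := by
  clear hfg hIe
  -- `st 1 = 1`
  have hst_one : st (1 : R) = 1 := by
    have h : ∀ b : R, st 1 * b = b := fun b => by
      conv_lhs => rw [← hst_inv b, ← hst_mul, mul_one, hst_inv]
    have := h 1
    rwa [mul_one] at this
  -- basic idempotent facts
  have hE : st e * st e = st e := by rw [← hst_mul, he]
  have hse : (1 - e - st e) * e = 0 := by
    rw [sub_mul, sub_mul, one_mul, he, hee']; abel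
  have hsE : (1 - e - st e) * st e = 0 := by
    rw [sub_mul, sub_mul, one_mul, hE, hee]; abel
  have hes : e * (1 - e - st e) = 0 := by
    rw [mul_sub, mul_sub, mul_one, he, hee]; abel
  have hEs : st e * (1 - e - st e) = 0 := by
    rw [mul_sub, mul_sub, mul_one, hE, hee']; abel
  have hss : (1 - e - st e) * (1 - e - st e) = (1 - e - st e) := by
    rw [mul_sub, mul_sub, mul_one, hse, hsE]; abel
  have hsts : st (1 - e - st e) = 1 - e - st e := by
    rw [map_sub, map_sub, hst_one, hst_inv]; abel
  -- `RsR = R` gives `1 ∈ span_F {a s b}`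
  have hone : (1 : R) ∈ Submodule.span F {x : R | ∃ a b : R, x = a * (1 - e - st e) * b} := by
    set G : Set R := {x : R | ∃ a b : R, x = a * (1 - e - st e) * b} with hG
    have hml : ∀ x y : R, y ∈ Submodule.span F G → x * y ∈ Submodule.span F G := by
      intro x y hy
      have key : Submodule.span F G ≤ (Submodule.span F G).comap (LinearMap.mulLeft F x) := by
        rw [Submodule.span_le]
        rintro z ⟨a, b, rfl⟩
        refine Submodule.mem_comap.mpr (Submodule.subset_span ⟨x * a, b, ?_⟩)
        rw [LinearMap.mulLeft_apply]; noncomm_ring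
      have := key hy
      rwa [Submodule.mem_comap, LinearMap.mulLeft_apply] at this
    have hmr : ∀ x y : R, y ∈ Submodule.span F G → y * x ∈ Submodule.span F G := by
      intro x y hy
      have key : Submodule.span F G ≤ (Submodule.span F G).comap (LinearMap.mulRight F x) := by
        rw [Submodule.span_le]
        rintro z ⟨a, b, rfl⟩
        refine Submodule.mem_comap.mpr (Submodule.subset_span ⟨a, b * x, ?_⟩)
        rw [LinearMap.mulRight_apply]; noncomm_ring
      have := key hy
      rwa [Submodule.mem_comap, LinearMap.mulRight_apply] at this
    set I : TwoSidedIdeal R := TwoSidedIdeal.mk' (Submodule.span F G : Set R)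
      (Submodule.zero_mem _)
      (fun hx hy => Submodule.add_mem _ hx hy)
      (fun hx => Submodule.neg_mem _ hx)
      (fun {x y} hy => hml x y hy)
      (fun {x y} hx => hmr y x hx) with hI
    have h1 : (1 : R) ∈ TwoSidedIdeal.span {1 - e - st e} := by rw [hIs]; trivial
    have h2 := TwoSidedIdeal.mem_span_iff.mp h1 I ?_
    · rwa [hI, TwoSidedIdeal.mem_mk'] at h2
    · rw [Set.singleton_subset_iff]
      show (1 - e - st e) ∈ I
      rw [hI, TwoSidedIdeal.mem_mk']
      exact Submodule.subset_span ⟨1, 1, by rw [one_mul, mul_one]⟩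
  have hA := aux_deg_two hchar st hst_mul hst_inv (st e) e (1 - e - st e)
    (hst_inv e) rfl hsts hss hsE hes hee hone
  have hB := aux_deg_two hchar st hst_mul hst_inv e (st e) (1 - e - st e)
    rfl (hst_inv e) hsts hss hse hEs hee' hone
  exact ⟨hA.1, hA.2, hB.1, hB.2⟩
end

section
/- Let R be a finitely generated unital associative F-algebra with an involution *, containing an idempotent e with ee* = e*e = 0 such that the two-sided ideal of R generated by e equals R and the two-sided ideal of R generated by s = 1 − e − e* equals R. Then there exists a finite subset M₋₁ ⊆ K₋₁ such that R₁ = spanF{m·a : m ∈ M₋₁, a ∈ R₂} + spanF{a·m : a ∈ R₂, m ∈ M₋₁}, and similarly there exists a finite subset M₁ ⊆ K₁ such that R₋₁ = spanF{m·a : m ∈ M₁, a ∈ R₋₂} + spanF{a·m : a ∈ R₋₂, m ∈ M₁}. -/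
/-- Generic form of one half of Lemma 5. -/
theorem degree_one_aux
    (F : Type*) [Field F]
    (R : Type*) [Ring R] [Algebra F R]
    (st : R →ₗ[F] R)
    (hst_mul : ∀ a b : R, st (a * b) = st b * st a)
    (hst_inv : ∀ a : R, st (st a) = a)
    (e f s : R) (he : e * e = e) (hf : f * f = f)
    (hef : e * f = 0) (hfe : f * e = 0)
    (hstef : st e = f) (hstfe : st f = e)
    (hs : s = 1 - e - f)
    (l : List (R × R))
    (hl : (l.map fun p => p.1 * e * p.2).sum = 1) :
    ∃ M : Finset R,
      (M : Set R) ⊆ {k : R | st k = -k ∧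
        ∃ r₁ r₂ : R, k = e * r₁ * s + s * r₂ * f} ∧
      {x : R | ∃ r₁ r₂ : R, x = f * r₁ * s + s * r₂ * e} =
        ↑(Submodule.span F {x : R | ∃ m ∈ M, ∃ r : R, x = m * (f * r * e)} ⊔
          Submodule.span F {x : R | ∃ r : R, ∃ m ∈ M, x = (f * r * e) * m}) := by
  classical
  -- basic contraction identities
  have hes : e * s = 0 := by
    rw [hs, mul_sub, mul_sub, mul_one, he, hef, sub_zero, sub_self]
  have hse : s * e = 0 := by
    rw [hs, sub_mul, sub_mul, one_mul, he, hfe, sub_zero, sub_self]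
  have hfs : f * s = 0 := by
    rw [hs, mul_sub, mul_sub, mul_one, hf, hfe, sub_zero, sub_self]
  have hsf : s * f = 0 := by
    rw [hs, sub_mul, sub_mul, one_mul, hf, hef, sub_zero, sub_self]
  have hes' : ∀ y : R, e * (s * y) = 0 := fun y => by rw [← mul_assoc, hes, zero_mul]
  have hse' : ∀ y : R, s * (e * y) = 0 := fun y => by rw [← mul_assoc, hse, zero_mul]
  have hfs' : ∀ y : R, f * (s * y) = 0 := fun y => by rw [← mul_assoc, hfs, zero_mul]
  have hsf' : ∀ y : R, s * (f * y) = 0 := fun y => by rw [← mul_assoc, hsf, zero_mul]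
  have hee'' : ∀ y : R, e * (e * y) = e * y := fun y => by rw [← mul_assoc, he]
  have hff'' : ∀ y : R, f * (f * y) = f * y := fun y => by rw [← mul_assoc, hf]
  have hef' : ∀ y : R, e * (f * y) = 0 := fun y => by rw [← mul_assoc, hef, zero_mul]
  have hfe' : ∀ y : R, f * (e * y) = 0 := fun y => by rw [← mul_assoc, hfe, zero_mul]
  -- st 1 = 1 and st s = s
  have hst1 : st 1 = 1 := by
    have h := hst_mul (st 1) 1
    rw [mul_one, hst_inv, mul_one] at h
    exact h.symm
  have hsts : st s = s := by
    rw [hs]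
    simp only [map_sub, hst1, hstef, hstfe]
    abel
  -- the skew elements
  set k : R × R → R := fun p => e * p.2 * s - s * st p.2 * f with hk
  have hkst : ∀ p : R × R, st (e * p.2 * s) = s * st p.2 * f := by
    intro p
    rw [hst_mul, hst_mul, hsts, hstef, mul_assoc]
  refine ⟨(l.map k).toFinset, ?_, ?_⟩
  · -- M ⊆ K₋₁
    intro m hm
    simp only [Finset.mem_coe, List.mem_toFinset, List.mem_map] at hm
    obtain ⟨p, _, rfl⟩ := hm
    constructor
    · rw [hk]
      simp only [map_sub, hkst p, hst_inv, neg_sub]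
      rw [show st (s * st p.2 * f) = e * p.2 * s by
        rw [hst_mul, hst_mul, hst_inv, hsts, hstfe, mul_assoc]]
    · exact ⟨p.2, -(st p.2), by simp only [hk]; noncomm_ring⟩
  · -- the main equality
    have hl' : (l.map fun p => st p.2 * f * st p.1).sum = 1 := by
      have h1 : (l.map fun p => st p.2 * f * st p.1)
          = (l.map fun p => p.1 * e * p.2).map st := by
        rw [List.map_map]
        refine List.map_congr_left fun p _ => ?_
        simp [Function.comp, hst_mul, hstef, mul_assoc]
      rw [h1, ← map_list_sum, hl, hst1]
    ext x
    simp only [Set.mem_setOf_eq, SetLike.mem_coe]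
    constructor
    · rintro ⟨r₁, r₂, rfl⟩
      refine add_mem ?_ ?_
      · -- f * r₁ * s  ∈  span B  (right multiplications)
        have hx : f * r₁ * s
            = (l.map fun p => (f * (r₁ * p.1) * e) * k p).sum := by
          have : (l.map fun p => f * r₁ * (p.1 * e * p.2) * s).sum = f * r₁ * s := by
            rw [List.sum_map_mul_right, List.sum_map_mul_left, hl, mul_one]
          rw [← this]
          congr 1
          refine List.map_congr_left fun p _ => ?_
          rw [hk]
          simp [mul_sub, sub_mul, mul_assoc, hee'', hes', hsf', hse', mul_zero]
        rw [hx]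
        refine Submodule.mem_sup_right (list_sum_mem fun y hy => ?_)
        simp only [List.mem_map] at hy
        obtain ⟨p, hp, rfl⟩ := hy
        refine Submodule.subset_span ⟨r₁ * p.1, k p,
          List.mem_toFinset.mpr (List.mem_map.mpr ⟨p, hp, rfl⟩), ?_⟩
        rfl
      · -- s * r₂ * e  ∈  span A  (left multiplications)
        have hx : s * r₂ * e
            = (l.map fun p => -(k p * (f * (st p.1 * r₂) * e))).sum := by
          have : (l.map fun p => s * (st p.2 * f * st p.1) * (r₂ * e)).sum
              = s * r₂ * e := by
            rw [List.sum_map_mul_right, List.sum_map_mul_left, hl', mul_one,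
              ← mul_assoc]
          rw [← this]
          congr 1
          refine List.map_congr_left fun p _ => ?_
          rw [hk]
          simp [mul_sub, sub_mul, mul_assoc, hff'', hes', hsf', mul_zero, neg_sub]
        rw [hx]
        refine Submodule.mem_sup_left (list_sum_mem fun y hy => ?_)
        simp only [List.mem_map] at hy
        obtain ⟨p, hp, rfl⟩ := hy
        refine neg_mem (Submodule.subset_span ⟨k p,
          List.mem_toFinset.mpr (List.mem_map.mpr ⟨p, hp, rfl⟩),
          st p.1 * r₂, ?_⟩)
        rfl
    · -- reverse inclusion
      intro hx
      have hS : ∀ y ∈ (Submodule.span F {x : R | ∃ m ∈ (l.map k).toFinset, ∃ r : R,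
            x = m * (f * r * e)} ⊔
          Submodule.span F {x : R | ∃ r : R, ∃ m ∈ (l.map k).toFinset,
            x = (f * r * e) * m}),
          ∃ r₁ r₂ : R, y = f * r₁ * s + s * r₂ * e := by
        intro y hy
        -- package the target set as a submodule
        let S : Submodule F R :=
          { carrier := {x : R | ∃ r₁ r₂ : R, x = f * r₁ * s + s * r₂ * e}
            add_mem' := by
              rintro a b ⟨a₁, a₂, rfl⟩ ⟨b₁, b₂, rfl⟩
              exact ⟨a₁ + b₁, a₂ + b₂, by noncomm_ring⟩
            zero_mem' := ⟨0, 0, by simp⟩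
            smul_mem' := by
              rintro c a ⟨a₁, a₂, rfl⟩
              exact ⟨c • a₁, c • a₂, by
                simp [smul_add, mul_smul_comm, smul_mul_assoc]⟩ }
        have h1 : Submodule.span F {x : R | ∃ m ∈ (l.map k).toFinset, ∃ r : R,
            x = m * (f * r * e)} ≤ S := by
          rw [Submodule.span_le]
          rintro y ⟨m, hm, r, rfl⟩
          simp only [List.mem_toFinset, List.mem_map] at hm
          obtain ⟨p, _, rfl⟩ := hm
          rw [hk]
          refine ⟨0, -(st p.2 * (f * r)), ?_⟩
          simp [mul_sub, sub_mul, mul_assoc, hff'', hsf', hse', mul_zero, neg_sub]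
        have h2 : Submodule.span F {x : R | ∃ r : R, ∃ m ∈ (l.map k).toFinset,
            x = (f * r * e) * m} ≤ S := by
          rw [Submodule.span_le]
          rintro y ⟨r, m, hm, rfl⟩
          simp only [List.mem_toFinset, List.mem_map] at hm
          obtain ⟨p, _, rfl⟩ := hm
          rw [hk]
          refine ⟨r * (e * p.2), 0, ?_⟩
          simp [mul_sub, sub_mul, mul_assoc, hee'', hes', mul_zero]
        exact (sup_le h1 h2) hy
      exact hS x hx




/-- **Lemma 5.**  There is a finite subset `M₋₁ ⊆ K₋₁` with
`R₁ = span{m·a : m ∈ M₋₁, a ∈ R₂} + span{a·m : a ∈ R₂, m ∈ M₋₁}`, and similarly a finite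
subset `M₁ ⊆ K₁` with `R₋₁ = span{m·a : m ∈ M₁, a ∈ R₋₂} + span{a·m : a ∈ R₋₂, m ∈ M₁}`. -/
theorem degree_one_components_from_finite_skew_sets
    (F : Type*) [Field F] (hchar : (2 : F) ≠ 0)
    (R : Type*) [Ring R] [Algebra F R]
    (hfg : ∃ s : Finset R, Algebra.adjoin F (s : Set R) = ⊤)
    (st : R →ₗ[F] R)
    (hst_mul : ∀ a b : R, st (a * b) = st b * st a)
    (hst_inv : ∀ a : R, st (st a) = a)
    (e : R) (he : e * e = e)
    (hee : e * st e = 0) (hee' : st e * e = 0)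
    (hIe : TwoSidedIdeal.span {e} = (⊤ : TwoSidedIdeal R))
    (hIs : TwoSidedIdeal.span {1 - e - st e} = (⊤ : TwoSidedIdeal R)) :
    (∃ M : Finset R,
      (M : Set R) ⊆ {k : R | st k = -k ∧
        ∃ r₁ r₂ : R, k = e * r₁ * (1 - e - st e) + (1 - e - st e) * r₂ * st e} ∧
      {x : R | ∃ r₁ r₂ : R, x = st e * r₁ * (1 - e - st e) + (1 - e - st e) * r₂ * e} =
        ↑(Submodule.span F {x : R | ∃ m ∈ M, ∃ r : R, x = m * (st e * r * e)} ⊔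
          Submodule.span F {x : R | ∃ r : R, ∃ m ∈ M, x = (st e * r * e) * m})) ∧
    (∃ M : Finset R,
      (M : Set R) ⊆ {k : R | st k = -k ∧
        ∃ r₁ r₂ : R, k = st e * r₁ * (1 - e - st e) + (1 - e - st e) * r₂ * e} ∧
      {x : R | ∃ r₁ r₂ : R, x = e * r₁ * (1 - e - st e) + (1 - e - st e) * r₂ * st e} =
        ↑(Submodule.span F {x : R | ∃ m ∈ M, ∃ r : R, x = m * (e * r * st e)} ⊔
          Submodule.span F {x : R | ∃ r : R, ∃ m ∈ M, x = (e * r * st e) * m})) := by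
  -- extract a finite expression of 1 from the ideal hypothesis
  have h1 : (1 : R) ∈ TwoSidedIdeal.span {e} := by rw [hIe]; trivial
  rw [TwoSidedIdeal.mem_span_iff_mem_addSubgroup_closure] at h1
  have hrep : ∃ l : List (R × R), (l.map fun p => p.1 * e * p.2).sum = 1 := by
    refine AddSubgroup.closure_induction (p := fun z _ =>
      ∃ l : List (R × R), (l.map fun p => p.1 * e * p.2).sum = z)
      ?_ ?_ ?_ ?_ h1
    · rintro x hx
      obtain ⟨u, hu, b, -, rfl⟩ := hx
      obtain ⟨a, -, c, hc, rfl⟩ := hu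
      rw [Set.mem_singleton_iff] at hc
      subst hc
      exact ⟨[(a, b)], by simp⟩
    · exact ⟨[], by simp⟩
    · rintro x y _ _ ⟨l₁, hl₁⟩ ⟨l₂, hl₂⟩
      exact ⟨l₁ ++ l₂, by rw [List.map_append, List.sum_append, hl₁, hl₂]⟩
    · rintro x _ ⟨l₁, hl₁⟩
      refine ⟨l₁.map fun p => (-p.1, p.2), ?_⟩
      rw [List.map_map]
      rw [show (fun p : R × R => p.1 * e * p.2) ∘ (fun p : R × R => (-p.1, p.2))
          = fun p : R × R => -(p.1 * e * p.2) by funext p; simp]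
      rw [← hl₁]
      have hneg : ∀ t : List (R × R),
          (t.map fun p => -(p.1 * e * p.2)).sum = -(t.map fun p => p.1 * e * p.2).sum := by
        intro t
        induction t with
        | nil => simp
        | cons a t ih => simp only [List.map_cons, List.sum_cons, ih]; abel
      exact hneg l₁
  obtain ⟨l, hl⟩ := hrep
  have hf : st e * st e = st e := by rw [← hst_mul, he]
  have hstfe : st (st e) = e := hst_inv e
  constructor
  · exact degree_one_aux F R st hst_mul hst_inv e (st e) (1 - e - st e)
      he hf hee hee' rfl hstfe rfl l hl
  · refine degree_one_aux F R st hst_mul hst_inv (st e) e (1 - e - st e)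
      hf he hee' hee hstfe rfl (by abel) (l.map fun p => (st p.2, st p.1)) ?_
    have : ((l.map fun p => (st p.2, st p.1)).map fun p => p.1 * st e * p.2)
        = (l.map fun p => p.1 * e * p.2).map st := by
      rw [List.map_map, List.map_map]
      refine List.map_congr_left fun p _ => ?_
      simp [Function.comp, hst_mul, mul_assoc]
    rw [this, ← map_list_sum, hl, show st 1 = 1 from ?_]
    have h := hst_mul (st 1) 1
    rw [mul_one, hst_inv, mul_one] at h
    exact h.symm
end

section
/- Let R be a finitely generated unital associative F-algebra with an involution *, containing an idempotent e with ee* = e*e = 0 such that the two-sided ideal of R generated by e equals R and the two-sided ideal of R generated by s = 1 − e − e* equals R. Then K₋₂ + K₋₁ + K₁ + K₂ is contained in the F-linear span of the set of commutators {[a,b] : a,b ∈ K}. -/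
/-- **Lemma 6(1).**  `K₋₂ + K₋₁ + K₁ + K₂` is contained in the `F`-linear span of the
set of commutators `{[a,b] : a, b ∈ K}`. -/
theorem graded_skew_components_sub_span_of_commutators
    (F : Type*) [Field F] (hchar : (2 : F) ≠ 0)
    (R : Type*) [Ring R] [Algebra F R]
    (hfg : ∃ s : Finset R, Algebra.adjoin F (s : Set R) = ⊤)
    (st : R →ₗ[F] R)
    (hst_mul : ∀ a b : R, st (a * b) = st b * st a)
    (hst_inv : ∀ a : R, st (st a) = a)
    (e : R) (he : e * e = e)
    (hee : e * st e = 0) (hee' : st e * e = 0)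
    (hIe : TwoSidedIdeal.span {e} = (⊤ : TwoSidedIdeal R))
    (hIs : TwoSidedIdeal.span {1 - e - st e} = (⊤ : TwoSidedIdeal R)) :
    ∀ a b c d : R,
      -- a ∈ K₋₂
      (st a = -a ∧ ∃ r : R, a = e * r * st e) →
      -- b ∈ K₋₁
      (st b = -b ∧ ∃ r₁ r₂ : R, b = e * r₁ * (1 - e - st e) + (1 - e - st e) * r₂ * st e) →
      -- c ∈ K₁
      (st c = -c ∧ ∃ r₁ r₂ : R, c = st e * r₁ * (1 - e - st e) + (1 - e - st e) * r₂ * e) →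
      -- d ∈ K₂
      (st d = -d ∧ ∃ r : R, d = st e * r * e) →
      a + b + c + d ∈
        Submodule.span F {x : R | ∃ u v : R, st u = -u ∧ st v = -v ∧ x = ⁅u, v⁆} := by
  intro a b c d ⟨ha, r, hra⟩ ⟨hb, r₁, r₂, hrb⟩ ⟨hc, p₁, p₂, hrc⟩ ⟨hd, q, hrd⟩
  set f := st e with hfdef
  have hff : f * f = f := by
    have := hst_mul e e
    rw [he] at this
    exact this.symm
  have hz : st (e - f) = -(e - f) := by
    rw [map_sub, hst_inv, hfdef, neg_sub]
  -- pointwise simp lemmas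
  have h1 : ∀ x : R, e * (e * x) = e * x := fun x => by rw [← mul_assoc, he]
  have h2 : ∀ x : R, e * (f * x) = 0 := fun x => by rw [← mul_assoc, hee, zero_mul]
  have h3 : ∀ x : R, f * (e * x) = 0 := fun x => by rw [← mul_assoc, hee', zero_mul]
  have h4 : ∀ x : R, f * (f * x) = f * x := fun x => by rw [← mul_assoc, hff]
  apply Submodule.add_mem
  apply Submodule.add_mem
  apply Submodule.add_mem
  · -- a ∈ span
    have hca : ⁅a, e - f⁆ = -(a + a) := by
      subst hra
      simp only [Ring.lie_def, mul_sub, sub_mul, mul_add, add_mul, mul_one, one_mul,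
        mul_assoc, he, hee, hee', hff, h1, h2, h3, h4, mul_zero, zero_mul]
      abel
    have haeq : a = (-(2 : F)⁻¹) • ⁅a, e - f⁆ := by
      rw [hca, neg_smul, smul_neg, neg_neg, show a + a = (2 : F) • a by
        rw [two_smul], smul_smul, inv_mul_cancel₀ hchar, one_smul]
    rw [haeq]
    exact Submodule.smul_mem _ _ (Submodule.subset_span ⟨a, e - f, ha, hz, rfl⟩)
  · -- b ∈ span
    have hcb : ⁅e - f, b⁆ = b := by
      subst hrb
      simp only [Ring.lie_def, mul_sub, sub_mul, mul_add, add_mul, mul_one, one_mul,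
        mul_assoc, he, hee, hee', hff, h1, h2, h3, h4, mul_zero, zero_mul]
      abel
    rw [← hcb]
    exact Submodule.subset_span ⟨e - f, b, hz, hb, rfl⟩
  · -- c ∈ span
    have hcc : ⁅c, e - f⁆ = c := by
      subst hrc
      simp only [Ring.lie_def, mul_sub, sub_mul, mul_add, add_mul, mul_one, one_mul,
        mul_assoc, he, hee, hee', hff, h1, h2, h3, h4, mul_zero, zero_mul]
      abel
    rw [← hcc]
    exact Submodule.subset_span ⟨c, e - f, hc, hz, rfl⟩
  · -- d ∈ span
    have hcd : ⁅d, e - f⁆ = d + d := by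
      subst hrd
      simp only [Ring.lie_def, mul_sub, sub_mul, mul_add, add_mul, mul_one, one_mul,
        mul_assoc, he, hee, hee', hff, h1, h2, h3, h4, mul_zero, zero_mul]
      abel
    have hdeq : d = ((2 : F)⁻¹) • ⁅d, e - f⁆ := by
      rw [hcd, show d + d = (2 : F) • d by rw [two_smul], smul_smul,
        inv_mul_cancel₀ hchar, one_smul]
    rw [hdeq]
    exact Submodule.smul_mem _ _ (Submodule.subset_span ⟨d, e - f, hd, hz, rfl⟩)
end

section
/- Let R be a unital associative F-algebra with an involution * and an idempotent e with ee* = e*e = 0. Let n ≥ 2, let a⁽¹⁾, …, a⁽ⁿ⁺¹⁾ ∈ K₂ ∪ H₂ and b⁽¹⁾, …, b⁽ⁿ⁾ ∈ K₋₂ ∪ H₋₂, and suppose the set {b⁽¹⁾, …, b⁽ⁿ⁾} has cardinality strictly less than n. Then the product a⁽¹⁾b⁽¹⁾a⁽²⁾b⁽²⁾⋯a⁽ⁿ⁾b⁽ⁿ⁾a⁽ⁿ⁺¹⁾ lies in the F-linear span of all elements of the form a⁽ⁱ¹⁾b⁽ʲ¹⁾a⁽ⁱ²⁾⋯b⁽ʲʳ⁾a⁽ⁱʳ⁺¹⁾·c,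 where r < n, the indices i₁,…,i_{r+1} range over {1,…,n+1} and j₁,…,j_r over {1,…,n}, and c is a product u·v with either u ∈ K₋₂, v ∈ K₂ or u ∈ H₋₂, v ∈ H₂. -/
namespace RepeatedFactorAux

/-- alternating word `C off * D off * C (off+1) * ⋯ * D (off+m-1) * C (off+m)`. -/
def wp {R : Type*} [Ring R] (C D : ℕ → R) (off : ℕ) : ℕ → R
  | 0 => C off
  | m + 1 => wp C D off m * (D (off + m) * C (off + m + 1))

/-- pair product `(D s * C (s+1)) * (D (s+1) * C (s+2)) * ⋯` with `q` pairs. -/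
def dp {R : Type*} [Ring R] (C D : ℕ → R) (s : ℕ) : ℕ → R
  | 0 => 1
  | q + 1 => dp C D s q * (D (s + q) * C (s + q + 1))

/-- `D s * C (s+1) * D (s+1) * ⋯ * D (s+q)`. -/
def xp {R : Type*} [Ring R] (C D : ℕ → R) (s q : ℕ) : R := dp C D s q * D (s + q)

section Ring
variable {R : Type*} [Ring R] (C D C' D' : ℕ → R)

@[simp] lemma wp_zero (off : ℕ) : wp C D off 0 = C off := rfl
lemma wp_succ (off m : ℕ) :
    wp C D off (m + 1) = wp C D off m * (D (off + m) * C (off + m + 1)) := rfl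
@[simp] lemma dp_zero (s : ℕ) : dp C D s 0 = 1 := rfl
lemma dp_succ (s q : ℕ) :
    dp C D s (q + 1) = dp C D s q * (D (s + q) * C (s + q + 1)) := rfl
@[simp] lemma xp_zero (s : ℕ) : xp C D s 0 = D s := by
  show (1:R) * D (s + 0) = D s; simp

lemma wp_congr : ∀ (m off off' : ℕ),
    (∀ t, t ≤ m → C (off + t) = C' (off' + t)) →
    (∀ t, t < m → D (off + t) = D' (off' + t)) →
    wp C D off m = wp C' D' off' m := by
  intro m
  induction m with
  | zero =>
      intro off off' hC _
      simpa using hC 0 (Nat.le_refl 0)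
  | succ m ih =>
      intro off off' hC hD
      show wp C D off m * (D (off + m) * C (off + m + 1)) = _
      rw [ih off off' (fun t ht => hC t (by omega)) (fun t ht => hD t (by omega)),
        hD m (by omega)]
      have := hC (m + 1) (by omega)
      rw [show off + (m+1) = off + m + 1 by omega, show off' + (m+1) = off' + m + 1 by omega] at this
      rw [this]
      rfl

lemma dp_congr : ∀ (q s s' : ℕ),
    (∀ t, 1 ≤ t → t ≤ q → C (s + t) = C' (s' + t)) →
    (∀ t, t < q → D (s + t) = D' (s' + t)) →
    dp C D s q = dp C' D' s' q := by
  intro q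
  induction q with
  | zero => intro _ _ _ _; rfl
  | succ q ih =>
      intro s s' hC hD
      have h1 := ih s s' (fun t h1 h2 => hC t h1 (by omega)) (fun t ht => hD t (by omega))
      have h2 := hD q (by omega)
      have h3 := hC (q + 1) (by omega) (by omega)
      rw [show s + (q+1) = s + q + 1 by omega, show s' + (q+1) = s' + q + 1 by omega] at h3
      rw [dp_succ, dp_succ, h1, h2, h3]

lemma wp_prepend : ∀ (m off : ℕ),
    wp C D off (m + 1) = C off * (D off * wp C D (off + 1) m) := by
  intro m
  induction m with
  | zero =>
      intro off
      show C off * (D off * C (off + 1)) = _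
      rfl
  | succ m ih =>
      intro off
      show wp C D off (m+1) * (D (off + (m+1)) * C (off + (m+1) + 1)) = _
      rw [ih off]
      have : wp C D (off+1) (m+1)
          = wp C D (off+1) m * (D (off + 1 + m) * C (off + 1 + m + 1)) := rfl
      rw [this, show off + 1 + m = off + (m+1) by omega,
        show off + (m+1) + 1 = off + (m + 1) + 1 by omega]
      simp only [mul_assoc]

lemma xp_succ (s q : ℕ) :
    xp C D s (q + 1) = xp C D s q * (C (s + q + 1) * D (s + q + 1)) := by
  show dp C D s (q+1) * D (s + (q+1)) = dp C D s q * D (s + q) * (C (s + q + 1) * D (s + q + 1))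
  show dp C D s q * (D (s + q) * C (s + q + 1)) * D (s + (q+1)) = _
  rw [show s + (q+1) = s + q + 1 by omega]
  simp only [mul_assoc]

lemma xp_prepend : ∀ (q s : ℕ),
    xp C D s (q + 1) = D s * (C (s + 1) * xp C D (s + 1) q) := by
  intro q
  induction q with
  | zero =>
      intro s
      rw [xp_succ, xp_zero, xp_zero]
  | succ q ih =>
      intro s
      rw [xp_succ, ih s, xp_succ]
      rw [show s + 1 + q = s + (q+1) by omega, show s + (q + 1) + 1 = s + 1 + q + 1 by omega]
      simp only [mul_assoc]

lemma sp1 : ∀ (m p off : ℕ),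
    wp C D off (p + 1 + m) = wp C D off p * (D (off + p) * wp C D (off + p + 1) m) := by
  intro m
  induction m with
  | zero =>
      intro p off
      show wp C D off p * (D (off + p) * C (off + p + 1)) = _
      rfl
  | succ m ih =>
      intro p off
      show wp C D off (p + 1 + m) * (D (off + (p+1+m)) * C (off + (p+1+m) + 1)) = _
      rw [ih p off]
      have : wp C D (off + p + 1) (m + 1)
          = wp C D (off+p+1) m * (D (off+p+1 + m) * C (off+p+1 + m + 1)) := rfl
      rw [this, show off + p + 1 + m = off + (p + 1 + m) by omega,
        show off + (p + 1 + m) + 1 = off + (p+1+m) + 1 by omega]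
      simp only [mul_assoc]

lemma spd : ∀ (q p off : ℕ),
    wp C D off (p + q) = wp C D off p * dp C D (off + p) q := by
  intro q
  induction q with
  | zero => intro p off; show wp C D off p = wp C D off p * 1; rw [mul_one]
  | succ q ih =>
      intro p off
      show wp C D off (p + q) * (D (off + (p + q)) * C (off + (p+q) + 1)) = _
      rw [ih p off]
      show _ = wp C D off p * (dp C D (off+p) q * (D (off + p + q) * C (off + p + q + 1)))
      rw [show off + p + q = off + (p + q) by omega,
        show off + (p + q) + 1 = off + (p+q) + 1 by omega]
      simp only [mul_assoc]

lemma sp2 (p q m off : ℕ) :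
    wp C D off (p + q + 1 + m)
      = wp C D off p * (xp C D (off + p) q * wp C D (off + p + q + 1) m) := by
  rw [sp1 C D m (p + q) off, spd C D q p off]
  show wp C D off p * dp C D (off+p) q * (D (off + (p + q)) * wp C D (off + (p+q) + 1) m) = _
  rw [show off + (p + q) = off + p + q by omega,
    show off + p + q + 1 = off + p + q + 1 by omega]
  show _ = wp C D off p * (dp C D (off + p) q * D (off + p + q) * wp C D (off + p + q + 1) m)
  simp only [mul_assoc]

end Ring

section Star
variable {F : Type*} [Field F] {R : Type*} [Ring R] [Algebra F R]
variable (st : R →ₗ[F] R)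

/-- `st u = ± v`. -/
def DefRel (u v : R) : Prop := st u = v ∨ st u = -v

lemma DefRel.mulrev (hst_mul : ∀ x y : R, st (x * y) = st y * st x)
    {u v u' v' : R} (hu : DefRel st u u') (hv : DefRel st v v') :
    DefRel st (u * v) (v' * u') := by
  rw [DefRel, hst_mul]
  rcases hu with hu | hu <;> rcases hv with hv | hv <;> rw [hu, hv] <;>
    simp [neg_mul, mul_neg, neg_neg]

lemma defrel_wp (hst_mul : ∀ x y : R, st (x * y) = st y * st x) (C D : ℕ → R)
    (hC : ∀ t, st (C t) = -(C t) ∨ st (C t) = C t)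
    (hD : ∀ t, st (D t) = -(D t) ∨ st (D t) = D t) :
    ∀ (m off : ℕ), DefRel st (wp C D off m)
      (wp (fun t => C (off + m - t)) (fun t => D (off + m - 1 - t)) 0 m) := by
  intro m
  induction m with
  | zero =>
      intro off
      show DefRel st (C off) _
      show DefRel st (C off) (C (off + 0 - 0))
      rcases hC off with h | h
      · exact Or.inr (by simpa using h)
      · exact Or.inl (by simpa using h)
  | succ m ih =>
      intro off
      have h1 : DefRel st (wp C D off m)
          (wp (fun t => C (off + m - t)) (fun t => D (off + m - 1 - t)) 0 m) := ih off
      have hcl : DefRel st (C (off + m + 1)) (C (off + m + 1)) := (hC _).symm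
      have hdl : DefRel st (D (off + m)) (D (off + m)) := (hD _).symm
      have h2 : DefRel st (D (off + m) * C (off + m + 1))
          (C (off + m + 1) * D (off + m)) := DefRel.mulrev st hst_mul hdl hcl
      have h3 := DefRel.mulrev st hst_mul h1 h2
      -- h3 : DefRel st (wp C D off (m+1)) ((C (off+m+1) * D (off+m)) * wp (rev m) 0 m)
      have htarget : wp (fun t => C (off + (m+1) - t)) (fun t => D (off + (m+1) - 1 - t)) 0 (m + 1)
          = C (off + m + 1) * D (off + m) *
            wp (fun t => C (off + m - t)) (fun t => D (off + m - 1 - t)) 0 m := by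
        rw [wp_prepend]
        have : wp (fun t => C (off + (m+1) - t)) (fun t => D (off + (m+1) - 1 - t)) (0+1) m
            = wp (fun t => C (off + m - t)) (fun t => D (off + m - 1 - t)) 0 m := by
          apply wp_congr
          · intro t ht; show C _ = C _; congr 1; omega
          · intro t ht; show D _ = D _; congr 1; omega
        rw [this]
        have e1 : off + (m+1) - 0 = off + m + 1 := by omega
        have e2 : off + (m+1) - 1 - 0 = off + m := by omega
        simp only [e1, e2, mul_assoc]
      rw [htarget]
      exact h3

lemma defrel_xp (hst_mul : ∀ x y : R, st (x * y) = st y * st x) (C D : ℕ → R)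
    (hC : ∀ t, st (C t) = -(C t) ∨ st (C t) = C t)
    (hD : ∀ t, st (D t) = -(D t) ∨ st (D t) = D t) :
    ∀ (q s : ℕ), DefRel st (xp C D s q)
      (xp (fun t => C (s + q + 1 - t)) (fun t => D (s + q - t)) 0 q) := by
  intro q
  induction q with
  | zero =>
      intro s
      have h1 : xp C D s 0 = D s := xp_zero C D s
      have h2 : xp (fun t => C (s + 0 + 1 - t)) (fun t => D (s + 0 - t)) 0 0 = D s := by
        rw [xp_zero]; norm_num
      rw [h1, h2]
      exact (hD s).symm
  | succ q ih =>
      intro s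
      rw [xp_succ]
      have h1 := ih s
      have hcl : DefRel st (C (s + q + 1)) (C (s + q + 1)) := (hC _).symm
      have hdl : DefRel st (D (s + q + 1)) (D (s + q + 1)) := (hD _).symm
      have h2 : DefRel st (C (s + q + 1) * D (s + q + 1))
          (D (s + q + 1) * C (s + q + 1)) := DefRel.mulrev st hst_mul hcl hdl
      have h3 := DefRel.mulrev st hst_mul h1 h2
      have htarget : xp (fun t => C (s + (q+1) + 1 - t)) (fun t => D (s + (q+1) - t)) 0 (q + 1)
          = D (s + q + 1) * C (s + q + 1) *
            xp (fun t => C (s + q + 1 - t)) (fun t => D (s + q - t)) 0 q := by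
        rw [xp_prepend]
        have : xp (fun t => C (s + (q+1) + 1 - t)) (fun t => D (s + (q+1) - t)) (0+1) q
            = xp (fun t => C (s + q + 1 - t)) (fun t => D (s + q - t)) 0 q := by
          unfold xp
          have hdp : dp (fun t => C (s + (q+1) + 1 - t)) (fun t => D (s + (q+1) - t)) (0+1) q
              = dp (fun t => C (s + q + 1 - t)) (fun t => D (s + q - t)) 0 q := by
            apply dp_congr
            · intro t h1t h2t; show C _ = C _; congr 1; omega
            · intro t ht; show D _ = D _; congr 1; omega
          rw [hdp]
          congr 1
          show D _ = D _
          congr 1; omega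
        rw [this]
        have e1 : s + (q+1) - 0 = s + q + 1 := by omega
        have e2 : s + (q+1) + 1 - (0+1) = s + q + 1 := by omega
        simp only [e1, e2, mul_assoc]
      rw [htarget]
      exact h3

lemma defrel_self {x : R} (h : st x = -x ∨ st x = x) : DefRel st x x := h.symm

section Forms
variable (e : R)

/-- closure used to show alternating words starting/ending with `R₂`-letters stay in
`st e * R * e` form. -/
lemma formA_step (he2 : ∀ x : R, e * (e * x) = e * x)
    (hs2 : ∀ x : R, st e * (st e * x) = st e * x) {x d c : R} (hx : ∃ s, x = st e * s * e) (hd : ∃ s, d = e * s * st e)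
    (hc : ∃ s, c = st e * s * e) : ∃ s, x * (d * c) = st e * s * e := by
  obtain ⟨s1, rfl⟩ := hx; obtain ⟨s2, rfl⟩ := hd; obtain ⟨s3, rfl⟩ := hc
  refine ⟨s1 * (e * (s2 * (st e * (s3)))), ?_⟩
  simp only [mul_assoc, he2, hs2]

lemma formB_step (he2 : ∀ x : R, e * (e * x) = e * x)
    (hs2 : ∀ x : R, st e * (st e * x) = st e * x) {x c d : R} (hx : ∃ s, x = e * s * st e) (hc : ∃ s, c = st e * s * e)
    (hd : ∃ s, d = e * s * st e) : ∃ s, x * (c * d) = e * s * st e := by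
  obtain ⟨s1, rfl⟩ := hx; obtain ⟨s2, rfl⟩ := hc; obtain ⟨s3, rfl⟩ := hd
  refine ⟨s1 * (st e * (s2 * (e * (s3)))), ?_⟩
  simp only [mul_assoc, he2, hs2]

lemma form_wp (he2 : ∀ x : R, e * (e * x) = e * x)
    (hs2 : ∀ x : R, st e * (st e * x) = st e * x) (C D : ℕ → R)
    (hC : ∀ t, ∃ s, C t = st e * s * e) (hD : ∀ t, ∃ s, D t = e * s * st e) :
    ∀ m off, ∃ s, wp C D off m = st e * s * e := by
  intro m
  induction m with
  | zero => intro off; exact hC off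
  | succ m ih =>
      intro off
      rw [wp_succ]
      exact formA_step st e he2 hs2 (ih off) (hD _) (hC _)

lemma form_xp (he2 : ∀ x : R, e * (e * x) = e * x)
    (hs2 : ∀ x : R, st e * (st e * x) = st e * x) (C D : ℕ → R)
    (hC : ∀ t, ∃ s, C t = st e * s * e) (hD : ∀ t, ∃ s, D t = e * s * st e) :
    ∀ q s, ∃ u, xp C D s q = e * u * st e := by
  intro q
  induction q with
  | zero => intro s; rw [xp_zero]; exact hD s
  | succ q ih =>
      intro s
      rw [xp_succ]
      exact formB_step st e he2 hs2 (ih s) (hC _) (hD _)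

end Forms

section Move
variable {e : R}

lemma form_st_B (hst_mul : ∀ x y : R, st (x * y) = st y * st x)
    (hst_inv : ∀ x : R, st (st x) = x) {x : R} (hx : ∃ s, x = e * s * st e) :
    ∃ s, st x = e * s * st e := by
  obtain ⟨s, rfl⟩ := hx
  refine ⟨st s, ?_⟩
  calc st (e * s * st e) = st (st e) * st (e * s) := hst_mul _ _
    _ = e * (st s * st e) := by rw [hst_inv, hst_mul]
    _ = e * st s * st e := (mul_assoc _ _ _).symm

lemma form_st_A (hst_mul : ∀ x y : R, st (x * y) = st y * st x)
    (hst_inv : ∀ x : R, st (st x) = x) {y : R} (hy : ∃ s, y = st e * s * e) :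
    ∃ s, st y = st e * s * e := by
  obtain ⟨s, rfl⟩ := hy
  refine ⟨st s, ?_⟩
  calc st (st e * s * e) = st e * st (st e * s) := by rw [hst_mul]
    _ = st e * (st s * st (st e)) := by rw [hst_mul]
    _ = st e * (st s * e) := by rw [hst_inv]
    _ = st e * st s * e := (mul_assoc _ _ _).symm

lemma move_core (hchar : (2 : F) ≠ 0)
    (hst_mul : ∀ x y : R, st (x * y) = st y * st x)
    (hst_inv : ∀ x : R, st (st x) = x)
    (S : Submodule F R) (w x y : R)
    (hx : ∃ s, x = e * s * st e) (hy : ∃ s, y = st e * s * e)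
    (hw : ∀ u v : R, (∃ s, u = e * s * st e) → (∃ s, v = st e * s * e) →
        ((st u = -u ∧ st v = -v) ∨ (st u = u ∧ st v = v)) → w * (u * v) ∈ S) :
    w * (x * y) + w * (st x * st y) ∈ S := by
  set c : F := (2:F)⁻¹ with hc
  set xh : R := c • (x + st x) with hxh_def
  set xk : R := c • (x - st x) with hxk_def
  set yh : R := c • (y + st y) with hyh_def
  set yk : R := c • (y - st y) with hyk_def
  have hxh : st xh = xh := by
    rw [hxh_def, map_smul, map_add, hst_inv, add_comm]
  have hxk : st xk = -xk := by
    rw [hxk_def, map_smul, map_sub, hst_inv, ← smul_neg, neg_sub]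
  have hyh : st yh = yh := by
    rw [hyh_def, map_smul, map_add, hst_inv, add_comm]
  have hyk : st yk = -yk := by
    rw [hyk_def, map_smul, map_sub, hst_inv, ← smul_neg, neg_sub]
  obtain ⟨s1, hs1⟩ := hx
  obtain ⟨s2, hs2⟩ := form_st_B (st := st) (e := e) hst_mul hst_inv ⟨s1, hs1⟩
  obtain ⟨s3, hs3⟩ := hy
  obtain ⟨s4, hs4⟩ := form_st_A (st := st) (e := e) hst_mul hst_inv ⟨s3, hs3⟩
  have hxhf : ∃ s, xh = e * s * st e := by
    refine ⟨c • (s1 + s2), ?_⟩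
    rw [hxh_def, hs2, hs1, ← add_mul, ← mul_add, ← smul_mul_assoc, ← mul_smul_comm]
  have hxkf : ∃ s, xk = e * s * st e := by
    refine ⟨c • (s1 - s2), ?_⟩
    rw [hxk_def, hs2, hs1, ← sub_mul, ← mul_sub, ← smul_mul_assoc, ← mul_smul_comm]
  have hyhf : ∃ s, yh = st e * s * e := by
    refine ⟨c • (s3 + s4), ?_⟩
    rw [hyh_def, hs4, hs3, ← add_mul, ← mul_add, ← smul_mul_assoc, ← mul_smul_comm]
  have hykf : ∃ s, yk = st e * s * e := by
    refine ⟨c • (s3 - s4), ?_⟩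
    rw [hyk_def, hs4, hs3, ← sub_mul, ← mul_sub, ← smul_mul_assoc, ← mul_smul_comm]
  have m1 : w * (xh * yh) ∈ S := hw xh yh hxhf hyhf (Or.inr ⟨hxh, hyh⟩)
  have m2 : w * (xk * yk) ∈ S := hw xk yk hxkf hykf (Or.inl ⟨hxk, hyk⟩)
  have expand : (x + st x) * (y + st y) + (x - st x) * (y - st y)
      = (2:F) • (x * y + st x * st y) := by
    simp only [add_mul, mul_add, sub_mul, mul_sub, two_smul]
    abel
  have key : (2:F) • (xh * yh + xk * yk) = x * y + st x * st y := by
    rw [hxh_def, hxk_def, hyh_def, hyk_def, smul_mul_smul_comm, smul_mul_smul_comm,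
      ← smul_add, expand, smul_smul, smul_smul]
    have h1 : (2:F) * (c * c) * 2 = 1 := by
      rw [hc]; field_simp
    rw [h1, one_smul]
  have final : w * (x * y) + w * (st x * st y)
      = (2:F) • (w * (xh * yh) + w * (xk * yk)) := by
    rw [← mul_add, ← mul_add, ← key, mul_smul_comm]
  rw [final]
  exact Submodule.smul_mem _ _ (Submodule.add_mem _ m1 m2)

lemma smove (hchar : (2 : F) ≠ 0)
    (hst_mul : ∀ x y : R, st (x * y) = st y * st x)
    (hst_inv : ∀ x : R, st (st x) = x)
    (S : Submodule F R) (w x y x' y' : R)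
    (hx : ∃ s, x = e * s * st e) (hy : ∃ s, y = st e * s * e)
    (hx' : DefRel st x x') (hy' : DefRel st y y')
    (hw : ∀ u v : R, (∃ s, u = e * s * st e) → (∃ s, v = st e * s * e) →
        ((st u = -u ∧ st v = -v) ∨ (st u = u ∧ st v = v)) → w * (u * v) ∈ S) :
    (w * (x * y) + w * (x' * y') ∈ S) ∨ (w * (x * y) - w * (x' * y') ∈ S) := by
  have hm := move_core (e := e) st hchar hst_mul hst_inv S w x y hx hy hw
  rcases hx' with h | h <;> rcases hy' with h2 | h2 <;> rw [h, h2] at hm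
  · exact Or.inl hm
  · right; simpa only [mul_neg, ← sub_eq_add_neg] using hm
  · right; simpa only [neg_mul, mul_neg, ← sub_eq_add_neg] using hm
  · left; simpa only [neg_mul, mul_neg, neg_neg] using hm

end Move

end Star

lemma b1 {R : Type*} [Ring R] {n : ℕ} (a : Fin (n + 1) → R) (b : Fin n → R)
    (I : ℕ → Fin (n + 1)) (J : ℕ → Fin n) :
    ∀ r : ℕ, (List.ofFn fun t : Fin r => a (I ↑t) * b (J ↑t)).prod * a (I r)
      = wp (fun t => a (I t)) (fun t => b (J t)) 0 r := by
  intro r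
  induction r with
  | zero => simp [wp]
  | succ r ih =>
      rw [List.ofFn_succ', List.prod_concat]
      have hcast : (fun i : Fin r =>
            (fun t : Fin (r+1) => a (I ↑t) * b (J ↑t)) i.castSucc)
          = fun i : Fin r => a (I ↑i) * b (J ↑i) := by
        funext i; simp
      rw [hcast, wp_succ, ← ih]
      simp only [Fin.val_last, Nat.zero_add]
      simp [mul_assoc]

/-- suffix-reversal on `a`-type index functions. -/
def srA {α : Type*} (I : ℕ → α) (p m : ℕ) : ℕ → α :=
  fun t => if t ≤ p then I t else I (m + p + 1 - t)

/-- suffix-reversal on `b`-type index functions. -/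
def srD {α : Type*} (J : ℕ → α) (p m : ℕ) : ℕ → α :=
  fun t => if t ≤ p then J t else J (m + p - t)

/-- splice used for the middle-block reversal, `b`-type side. -/
def srD' {α : Type*} (J : ℕ → α) (p m : ℕ) : ℕ → α :=
  fun t => if t < p then J t else J (m + p - 1 - t)

lemma srA_le {α : Type*} (I : ℕ → α) (p m t : ℕ) (h : t ≤ p) : srA I p m t = I t := if_pos h
lemma srA_gt {α : Type*} (I : ℕ → α) (p m t : ℕ) (h : ¬ t ≤ p) :
    srA I p m t = I (m + p + 1 - t) := if_neg h
lemma srD_le {α : Type*} (J : ℕ → α) (p m t : ℕ) (h : t ≤ p) : srD J p m t = J t := if_pos h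
lemma srD_gt {α : Type*} (J : ℕ → α) (p m t : ℕ) (h : ¬ t ≤ p) :
    srD J p m t = J (m + p - t) := if_neg h
lemma srD'_lt {α : Type*} (J : ℕ → α) (p m t : ℕ) (h : t < p) : srD' J p m t = J t := if_pos h
lemma srD'_ge {α : Type*} (J : ℕ → α) (p m t : ℕ) (h : ¬ t < p) :
    srD' J p m t = J (m + p - 1 - t) := if_neg h

end RepeatedFactorAux

set_option maxHeartbeats 2000000 in
/-- **Lemma 7.**  Let `R` carry an involution and an idempotent `e` with
`e e* = e* e = 0`.  If `n ≥ 2`, `a⁽¹⁾, …, a⁽ⁿ⁺¹⁾ ∈ K₂ ∪ H₂`,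
`b⁽¹⁾, …, b⁽ⁿ⁾ ∈ K₋₂ ∪ H₋₂` and the `b⁽ʲ⁾` take fewer than `n` distinct values, then
`a⁽¹⁾b⁽¹⁾⋯a⁽ⁿ⁾b⁽ⁿ⁾a⁽ⁿ⁺¹⁾` lies in the span of the products
`a⁽ⁱ¹⁾b⁽ʲ¹⁾⋯b⁽ʲʳ⁾a⁽ⁱʳ⁺¹⁾·(u·v)` with `r < n` and `u ∈ K₋₂, v ∈ K₂` or
`u ∈ H₋₂, v ∈ H₂`. -/
theorem repeated_factor_reduction
    (F : Type*) [Field F] (hchar : (2 : F) ≠ 0)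
    (R : Type*) [Ring R] [Algebra F R]
    (st : R →ₗ[F] R)
    (hst_mul : ∀ x y : R, st (x * y) = st y * st x)
    (hst_inv : ∀ x : R, st (st x) = x)
    (e : R) (he : e * e = e)
    (hee : e * st e = 0) (hee' : st e * e = 0)
    (n : ℕ) (hn : 2 ≤ n)
    (a : Fin (n + 1) → R) (b : Fin n → R)
    (ha : ∀ i, (st (a i) = -(a i) ∨ st (a i) = a i) ∧ ∃ r : R, a i = st e * r * e)
    (hb : ∀ j, (st (b j) = -(b j) ∨ st (b j) = b j) ∧ ∃ r : R, b j = e * r * st e)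
    (hcard : Set.ncard (Set.range b) < n) :
    (List.ofFn fun i : Fin n => a i.castSucc * b i).prod * a (Fin.last n) ∈
      Submodule.span F
        {x : R | ∃ r : ℕ, r < n ∧
          ∃ (i : Fin (r + 1) → Fin (n + 1)) (j : Fin r → Fin n) (u v : R),
            ((st u = -u ∧ (∃ s : R, u = e * s * st e) ∧
                st v = -v ∧ ∃ s : R, v = st e * s * e) ∨
              (st u = u ∧ (∃ s : R, u = e * s * st e) ∧
                st v = v ∧ ∃ s : R, v = st e * s * e)) ∧
            x = (List.ofFn fun t : Fin r => a (i t.castSucc) * b (j t)).prod *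
                  a (i (Fin.last r)) * (u * v)} := by
  classical
  open RepeatedFactorAux in
  set S : Submodule F R := Submodule.span F
        {x : R | ∃ r : ℕ, r < n ∧
          ∃ (i : Fin (r + 1) → Fin (n + 1)) (j : Fin r → Fin n) (u v : R),
            ((st u = -u ∧ (∃ s : R, u = e * s * st e) ∧
                st v = -v ∧ ∃ s : R, v = st e * s * e) ∨
              (st u = u ∧ (∃ s : R, u = e * s * st e) ∧
                st v = v ∧ ∃ s : R, v = st e * s * e)) ∧
            x = (List.ofFn fun t : Fin r => a (i t.castSucc) * b (j t)).prod *
                  a (i (Fin.last r)) * (u * v)} with hSdef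
  have hste : st e * st e = st e := by rw [← hst_mul, he]
  have he2 : ∀ x : R, e * (e * x) = e * x := fun x => by rw [← mul_assoc, he]
  have hs2 : ∀ x : R, st e * (st e * x) = st e * x := fun x => by rw [← mul_assoc, hste]
  have hn0 : 0 < n := by omega
  set I0 : ℕ → Fin (n+1) := fun t => ⟨min t n, by omega⟩ with hI0
  set J0 : ℕ → Fin n := fun t => ⟨min t (n-1), by omega⟩ with hJ0
  -- the generator membership
  have hgen : ∀ (r : ℕ), r < n → ∀ (I : ℕ → Fin (n+1)) (J : ℕ → Fin n) (u v : R),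
      (∃ s, u = e * s * st e) → (∃ s, v = st e * s * e) →
      ((st u = -u ∧ st v = -v) ∨ (st u = u ∧ st v = v)) →
      RepeatedFactorAux.wp (fun t => a (I t)) (fun t => b (J t)) 0 r * (u * v) ∈ S := by
    intro r hr I J u v hu hv hm
    apply Submodule.subset_span
    refine ⟨r, hr, fun t => I ↑t, fun t => J ↑t, u, v, ?_, ?_⟩
    · rcases hm with ⟨h1, h2⟩ | ⟨h1, h2⟩
      · exact Or.inl ⟨h1, hu, h2, hv⟩
      · exact Or.inr ⟨h1, hu, h2, hv⟩
    · have h1 : (fun t : Fin r => a (I ↑(Fin.castSucc t)) * b (J ↑t))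
          = fun t : Fin r => a (I ↑t) * b (J ↑t) := by
        funext t; rw [Fin.coe_castSucc]
      show _ = (List.ofFn fun t : Fin r => a (I ↑(Fin.castSucc t)) * b (J ↑t)).prod *
          a (I ↑(Fin.last r)) * (u * v)
      rw [h1, Fin.val_last, RepeatedFactorAux.b1 a b I J r]
  -- the statement product as a `wp`
  have hP : (List.ofFn fun i : Fin n => a i.castSucc * b i).prod * a (Fin.last n)
      = RepeatedFactorAux.wp (fun t => a (I0 t)) (fun t => b (J0 t)) 0 n := by
    have h1 : (fun i : Fin n => a i.castSucc * b i)
        = fun i : Fin n => a (I0 ↑i) * b (J0 ↑i) := by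
      funext i
      have hi := i.isLt
      have e1 : I0 ↑i = i.castSucc := by
        apply Fin.ext; simp only [hI0, Fin.coe_castSucc]; omega
      have e2 : J0 ↑i = i := by
        apply Fin.ext; simp only [hJ0]; omega
      rw [e1, e2]
    have h2 : a (Fin.last n) = a (I0 n) := by
      congr 1; apply Fin.ext; simp only [hI0, Fin.val_last]; omega
    rw [h1, h2, RepeatedFactorAux.b1 a b I0 J0 n]
  rw [hP]
  have relstep : ∀ u v : R, (u + v ∈ S ∨ u - v ∈ S) → v ∈ S → u ∈ S := by
    intro u v h hv
    rcases h with h | h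
    · have := Submodule.sub_mem S h hv; simpa using this
    · have := Submodule.add_mem S h hv; simpa using this
  -- definiteness and membership forms for letters
  have hadef : ∀ (I : ℕ → Fin (n+1)) (t : ℕ),
      st (a (I t)) = -(a (I t)) ∨ st (a (I t)) = a (I t) := fun I t => (ha _).1
  have hbdef : ∀ (J : ℕ → Fin n) (t : ℕ),
      st (b (J t)) = -(b (J t)) ∨ st (b (J t)) = b (J t) := fun J t => (hb _).1
  have haform : ∀ (I : ℕ → Fin (n+1)) (t : ℕ), ∃ s, a (I t) = st e * s * e := fun I t => (ha _).2
  have hbform : ∀ (J : ℕ → Fin n) (t : ℕ), ∃ s, b (J t) = e * s * st e := fun J t => (hb _).2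
  -- Move 1 : suffix reversal after the cut `t0`.
  have move1 : ∀ t0 : ℕ, t0 ≤ n - 1 →
      (RepeatedFactorAux.wp (fun t => a (I0 t)) (fun t => b (J0 t)) 0 n
          + RepeatedFactorAux.wp (fun t => a (RepeatedFactorAux.srA I0 t0 n t))
              (fun t => b (RepeatedFactorAux.srD J0 t0 n t)) 0 n ∈ S) ∨
      (RepeatedFactorAux.wp (fun t => a (I0 t)) (fun t => b (J0 t)) 0 n
          - RepeatedFactorAux.wp (fun t => a (RepeatedFactorAux.srA I0 t0 n t))
              (fun t => b (RepeatedFactorAux.srD J0 t0 n t)) 0 n ∈ S) := by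
    intro t0 ht0
    set m : ℕ := n - 1 - t0 with hm
    have hsum : t0 + 1 + m = n := by omega
    -- decomposition of the original word
    have hdec := RepeatedFactorAux.sp1 (fun t => a (I0 t)) (fun t => b (J0 t)) m t0 0
    rw [hsum] at hdec
    simp only [Nat.zero_add] at hdec
    -- the signed move
    have hsm := RepeatedFactorAux.smove (e := e) st hchar hst_mul hst_inv S
      (RepeatedFactorAux.wp (fun t => a (I0 t)) (fun t => b (J0 t)) 0 t0)
      (b (J0 t0))
      (RepeatedFactorAux.wp (fun t => a (I0 t)) (fun t => b (J0 t)) (t0 + 1) m)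
      (b (J0 t0))
      (RepeatedFactorAux.wp (fun t => a (I0 (t0 + 1 + m - t)))
        (fun t => b (J0 (t0 + 1 + m - 1 - t))) 0 m)
      (hbform J0 t0)
      (RepeatedFactorAux.form_wp st e he2 hs2 _ _ (haform I0) (hbform J0) m (t0+1))
      (RepeatedFactorAux.defrel_self st (hbdef J0 t0))
      (RepeatedFactorAux.defrel_wp st hst_mul _ _ (hadef I0) (hbdef J0) m (t0+1))
      (hgen t0 (by omega) I0 J0)
    -- identify the reversed word
    have hrev : RepeatedFactorAux.wp (fun t => a (I0 t)) (fun t => b (J0 t)) 0 t0 *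
        (b (J0 t0) * RepeatedFactorAux.wp (fun t => a (I0 (t0 + 1 + m - t)))
          (fun t => b (J0 (t0 + 1 + m - 1 - t))) 0 m)
        = RepeatedFactorAux.wp (fun t => a (RepeatedFactorAux.srA I0 t0 n t))
            (fun t => b (RepeatedFactorAux.srD J0 t0 n t)) 0 n := by
      have h1 := RepeatedFactorAux.sp1 (fun t => a (RepeatedFactorAux.srA I0 t0 n t))
        (fun t => b (RepeatedFactorAux.srD J0 t0 n t)) m t0 0
      rw [hsum] at h1
      simp only [Nat.zero_add] at h1
      rw [h1]
      have e1 : RepeatedFactorAux.wp (fun t => a (I0 t)) (fun t => b (J0 t)) 0 t0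
          = RepeatedFactorAux.wp (fun t => a (RepeatedFactorAux.srA I0 t0 n t))
              (fun t => b (RepeatedFactorAux.srD J0 t0 n t)) 0 t0 := by
        apply RepeatedFactorAux.wp_congr
        · intro t ht; show a _ = a _
          rw [RepeatedFactorAux.srA_le I0 t0 n (0+t) (by omega)]
        · intro t ht; show b _ = b _
          rw [RepeatedFactorAux.srD_le J0 t0 n (0+t) (by omega)]
      have e2 : b (J0 t0) = b (RepeatedFactorAux.srD J0 t0 n t0) := by
        rw [RepeatedFactorAux.srD_le J0 t0 n t0 (le_refl t0)]
      have e3 : RepeatedFactorAux.wp (fun t => a (I0 (t0 + 1 + m - t)))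
            (fun t => b (J0 (t0 + 1 + m - 1 - t))) 0 m
          = RepeatedFactorAux.wp (fun t => a (RepeatedFactorAux.srA I0 t0 n t))
              (fun t => b (RepeatedFactorAux.srD J0 t0 n t)) (t0+1) m := by
        apply RepeatedFactorAux.wp_congr
        · intro t ht; show a _ = a _
          rw [RepeatedFactorAux.srA_gt I0 t0 n (t0+1+t) (by omega),
            show n + t0 + 1 - (t0+1+t) = t0 + 1 + m - (0+t) by omega]
        · intro t ht; show b _ = b _
          rw [RepeatedFactorAux.srD_gt J0 t0 n (t0+1+t) (by omega),
            show n + t0 - (t0+1+t) = t0 + 1 + m - 1 - (0+t) by omega]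
      rw [← e1, ← e2, ← e3]
    rw [← hdec, hrev] at hsm
    exact hsm
  -- a repeated factor among the `b`s
  have hrep : ∃ j k : Fin n, (j:ℕ) < (k:ℕ) ∧ b j = b k := by
    by_contra hcon
    push_neg at hcon
    have hinj : Function.Injective b := by
      intro x y hxy
      by_contra hne
      have hxyne : (x:ℕ) ≠ (y:ℕ) := fun h => hne (Fin.ext h)
      rcases Nat.lt_or_ge (x:ℕ) (y:ℕ) with h | h
      · exact (hcon x y h) hxy
      · exact (hcon y x (by omega)) hxy.symm
    have hcd := Nat.card_range_of_injective hinj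
    rw [Nat.card_coe_set_eq, Nat.card_eq_fintype_card, Fintype.card_fin] at hcd
    omega
  obtain ⟨jj, kk, hjklt, hbjk⟩ := hrep
  have hjjlt := jj.isLt
  have hkklt := kk.isLt
  by_cases hA : ∃ (l : Fin n) (g : Fin (n+1)), 1 ≤ (g:ℕ) ∧
      ((st (b l) = -(b l) ∧ st (a g) = -(a g)) ∨ (st (b l) = b l ∧ st (a g) = a g))
  · -- CASE A : some matched pair of letters exists
    obtain ⟨l, g, hg1, hmatch⟩ := hA
    have hln := l.isLt
    have hgn : (g:ℕ) ≤ n := by have := g.isLt; omega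
    set t0 : ℕ := (g:ℕ) - 1 with ht0def
    have ht0 : t0 ≤ n - 1 := by omega
    have hrel1 := move1 t0 ht0
    set I1 : ℕ → Fin (n+1) := RepeatedFactorAux.srA I0 t0 n with hI1
    set J1 : ℕ → Fin n := RepeatedFactorAux.srD J0 t0 n with hJ1
    set l' : ℕ := if (l:ℕ) ≤ t0 then (l:ℕ) else n + t0 - l with hl'def
    have hl' : l' ≤ n - 1 := by rw [hl'def]; split_ifs <;> omega
    set q : ℕ := n - 1 - l' with hqdef
    have hsum2 : l' + q + 1 + 0 = n := by omega
    -- index evaluations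
    have hJl : J1 l' = l := by
      by_cases h : (l:ℕ) ≤ t0
      · have hl'eq : l' = l := by rw [hl'def, if_pos h]
        rw [hl'eq, hJ1, RepeatedFactorAux.srD_le J0 t0 n l h]
        apply Fin.ext; simp only [hJ0]; omega
      · have hl'eq : l' = n + t0 - l := by rw [hl'def, if_neg h]
        rw [hl'eq, hJ1, RepeatedFactorAux.srD_gt J0 t0 n (n + t0 - l) (by omega),
          show n + t0 - (n + t0 - (l:ℕ)) = l by omega]
        apply Fin.ext; simp only [hJ0]; omega
    have hIn : I1 n = g := by
      rw [hI1, RepeatedFactorAux.srA_gt I0 t0 n n (by omega),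
        show n + t0 + 1 - n = t0 + 1 by omega]
      apply Fin.ext; simp only [hI0]; omega
    -- move 2
    have hdec2 := RepeatedFactorAux.sp2 (fun t => a (I1 t)) (fun t => b (J1 t)) l' q 0 0
    rw [hsum2] at hdec2
    simp only [Nat.zero_add] at hdec2
    have hsm2 := RepeatedFactorAux.smove (e := e) st hchar hst_mul hst_inv S
      (RepeatedFactorAux.wp (fun t => a (I1 t)) (fun t => b (J1 t)) 0 l')
      (RepeatedFactorAux.xp (fun t => a (I1 t)) (fun t => b (J1 t)) l' q)
      (RepeatedFactorAux.wp (fun t => a (I1 t)) (fun t => b (J1 t)) (l' + q + 1) 0)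
      (RepeatedFactorAux.xp (fun t => a (I1 (l' + q + 1 - t)))
        (fun t => b (J1 (l' + q - t))) 0 q)
      (RepeatedFactorAux.wp (fun t => a (I1 t)) (fun t => b (J1 t)) (l' + q + 1) 0)
      (RepeatedFactorAux.form_xp st e he2 hs2 _ _ (haform I1) (hbform J1) q l')
      (RepeatedFactorAux.form_wp st e he2 hs2 _ _ (haform I1) (hbform J1) 0 (l'+q+1))
      (RepeatedFactorAux.defrel_xp st hst_mul _ _ (hadef I1) (hbdef J1) q l')
      (RepeatedFactorAux.defrel_self st (hadef I1 (l'+q+1)))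
      (hgen l' (by omega) I1 J1)
    rw [← hdec2] at hsm2
    -- terminal membership
    set I3 : ℕ → Fin (n+1) := RepeatedFactorAux.srA I1 l' (n-1) with hI3
    set J3 : ℕ → Fin n := RepeatedFactorAux.srD' J1 l' n with hJ3
    have hterm : RepeatedFactorAux.wp (fun t => a (I1 t)) (fun t => b (J1 t)) 0 l' *
        (RepeatedFactorAux.xp (fun t => a (I1 (l' + q + 1 - t)))
            (fun t => b (J1 (l' + q - t))) 0 q *
          RepeatedFactorAux.wp (fun t => a (I1 t)) (fun t => b (J1 t)) (l' + q + 1) 0) ∈ S := by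
      have hmatch3 : (st (b (J1 l')) = -(b (J1 l')) ∧ st (a (I1 n)) = -(a (I1 n))) ∨
          (st (b (J1 l')) = b (J1 l') ∧ st (a (I1 n)) = a (I1 n)) := by
        rw [hJl, hIn]; exact hmatch
      have hm := hgen (n-1) (by omega) I3 J3 (b (J1 l')) (a (I1 n))
        ((hb _).2) ((ha _).2) hmatch3
      have hw3 := RepeatedFactorAux.spd (fun t => a (I3 t)) (fun t => b (J3 t)) q l' 0
      simp only [Nat.zero_add] at hw3
      have e1 : RepeatedFactorAux.wp (fun t => a (I3 t)) (fun t => b (J3 t)) 0 l'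
          = RepeatedFactorAux.wp (fun t => a (I1 t)) (fun t => b (J1 t)) 0 l' := by
        apply RepeatedFactorAux.wp_congr
        · intro t ht; show a _ = a _
          rw [hI3, RepeatedFactorAux.srA_le I1 l' (n-1) (0+t) (by omega)]
        · intro t ht; show b _ = b _
          rw [hJ3, RepeatedFactorAux.srD'_lt J1 l' n (0+t) (by omega)]
      have e2 : RepeatedFactorAux.dp (fun t => a (I3 t)) (fun t => b (J3 t)) l' q
          = RepeatedFactorAux.dp (fun t => a (I1 (l' + q + 1 - t)))
              (fun t => b (J1 (l' + q - t))) 0 q := by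
        apply RepeatedFactorAux.dp_congr
        · intro t ht1 ht2; show a _ = a _
          rw [hI3, RepeatedFactorAux.srA_gt I1 l' (n-1) (l'+t) (by omega),
            show n - 1 + l' + 1 - (l' + t) = l' + q + 1 - (0 + t) by omega]
        · intro t ht; show b _ = b _
          rw [hJ3, RepeatedFactorAux.srD'_ge J1 l' n (l'+t) (by omega),
            show n + l' - 1 - (l' + t) = l' + q - (0 + t) by omega]
      have e3 : RepeatedFactorAux.xp (fun t => a (I1 (l' + q + 1 - t)))
            (fun t => b (J1 (l' + q - t))) 0 q
          = RepeatedFactorAux.dp (fun t => a (I1 (l' + q + 1 - t)))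
              (fun t => b (J1 (l' + q - t))) 0 q * b (J1 l') := by
        show RepeatedFactorAux.dp _ _ 0 q * _ = _
        congr 1
        show b (J1 (l' + q - (0 + q))) = b (J1 l')
        rw [show l' + q - (0 + q) = l' by omega]
      have e4 : RepeatedFactorAux.wp (fun t => a (I1 t)) (fun t => b (J1 t)) (l'+q+1) 0
          = a (I1 n) := by
        show a (I1 (l'+q+1)) = a (I1 n)
        rw [show l' + q + 1 = n by omega]
      have heq : RepeatedFactorAux.wp (fun t => a (I1 t)) (fun t => b (J1 t)) 0 l' *
          (RepeatedFactorAux.xp (fun t => a (I1 (l' + q + 1 - t)))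
              (fun t => b (J1 (l' + q - t))) 0 q *
            RepeatedFactorAux.wp (fun t => a (I1 t)) (fun t => b (J1 t)) (l' + q + 1) 0)
          = RepeatedFactorAux.wp (fun t => a (I3 t)) (fun t => b (J3 t)) 0 (n-1) *
              (b (J1 l') * a (I1 n)) := by
        rw [e3, e4, show n - 1 = l' + q by omega, hw3, e1, e2]
        simp only [mul_assoc]
      rw [heq]
      exact hm
    exact relstep _ _ hrel1 (relstep _ _ hsm2 hterm)
  · -- CASE B : every crossed pair of letters is mismatched; use the repeated factor
    set t0 : ℕ := (kk:ℕ) - 1 with ht0def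
    have hk1 : 1 ≤ (kk:ℕ) := by omega
    have ht0 : t0 ≤ n - 1 := by omega
    have hrel1 := move1 t0 ht0
    set I1 : ℕ → Fin (n+1) := RepeatedFactorAux.srA I0 t0 n with hI1
    set J1 : ℕ → Fin n := RepeatedFactorAux.srD J0 t0 n with hJ1
    set j : ℕ := (jj:ℕ) with hjdef
    have hjt0 : j ≤ t0 := by omega
    have hjn2 : j ≤ n - 2 := by omega
    set q : ℕ := n - 2 - j with hqdef
    have hsum2 : j + q + 1 + 1 = n := by omega
    -- index evaluations
    have hJ1j : J1 j = jj := by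
      rw [hJ1, RepeatedFactorAux.srD_le J0 t0 n j hjt0]
      apply Fin.ext; simp only [hJ0]; omega
    have hJ1n1 : J1 (n-1) = kk := by
      rw [hJ1, RepeatedFactorAux.srD_gt J0 t0 n (n-1) (by omega),
        show n + t0 - (n-1) = t0 + 1 by omega]
      apply Fin.ext; simp only [hJ0]; omega
    have hkk1n : (kk:ℕ) + 1 ≤ n := by omega
    set gk : Fin (n+1) := ⟨(kk:ℕ), by omega⟩ with hgk
    set gk1 : Fin (n+1) := ⟨(kk:ℕ) + 1, by omega⟩ with hgk1
    have hI1n : I1 n = gk := by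
      rw [hI1, RepeatedFactorAux.srA_gt I0 t0 n n (by omega),
        show n + t0 + 1 - n = t0 + 1 by omega]
      apply Fin.ext; simp only [hI0, hgk]; omega
    have hI1n1 : I1 (n-1) = gk1 := by
      rw [hI1, RepeatedFactorAux.srA_gt I0 t0 n (n-1) (by omega),
        show n + t0 + 1 - (n-1) = t0 + 2 by omega]
      apply Fin.ext; simp only [hI0, hgk1]; omega
    -- move 2
    have hdec2 := RepeatedFactorAux.sp2 (fun t => a (I1 t)) (fun t => b (J1 t)) j q 1 0
    rw [hsum2] at hdec2
    simp only [Nat.zero_add] at hdec2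
    have hsm2 := RepeatedFactorAux.smove (e := e) st hchar hst_mul hst_inv S
      (RepeatedFactorAux.wp (fun t => a (I1 t)) (fun t => b (J1 t)) 0 j)
      (RepeatedFactorAux.xp (fun t => a (I1 t)) (fun t => b (J1 t)) j q)
      (RepeatedFactorAux.wp (fun t => a (I1 t)) (fun t => b (J1 t)) (j + q + 1) 1)
      (RepeatedFactorAux.xp (fun t => a (I1 (j + q + 1 - t)))
        (fun t => b (J1 (j + q - t))) 0 q)
      (RepeatedFactorAux.wp (fun t => a (I1 (j + q + 1 + 1 - t)))
        (fun t => b (J1 (j + q + 1 + 1 - 1 - t))) 0 1)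
      (RepeatedFactorAux.form_xp st e he2 hs2 _ _ (haform I1) (hbform J1) q j)
      (RepeatedFactorAux.form_wp st e he2 hs2 _ _ (haform I1) (hbform J1) 1 (j+q+1))
      (RepeatedFactorAux.defrel_xp st hst_mul _ _ (hadef I1) (hbdef J1) q j)
      (RepeatedFactorAux.defrel_wp st hst_mul _ _ (hadef I1) (hbdef J1) 1 (j+q+1))
      (hgen j (by omega) I1 J1)
    rw [← hdec2] at hsm2
    -- terminal membership
    set I3 : ℕ → Fin (n+1) := RepeatedFactorAux.srA I1 j (n-2) with hI3
    set J3 : ℕ → Fin n := RepeatedFactorAux.srD' J1 j (n-1) with hJ3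
    set u0 : R := b jj * (a gk * b kk) with hu0
    have hterm : RepeatedFactorAux.wp (fun t => a (I1 t)) (fun t => b (J1 t)) 0 j *
        (RepeatedFactorAux.xp (fun t => a (I1 (j + q + 1 - t)))
            (fun t => b (J1 (j + q - t))) 0 q *
          RepeatedFactorAux.wp (fun t => a (I1 (j + q + 1 + 1 - t)))
            (fun t => b (J1 (j + q + 1 + 1 - 1 - t))) 0 1) ∈ S := by
      -- the sandwich u₀ is definite with the sign of `a gk`, and matches `a gk1`
      have hbkk : st (b kk) = st (b jj) := by rw [hbjk]
      have hstu : st u0 = st (b kk) * st (a gk) * st (b jj) := by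
        rw [hu0, hst_mul, hst_mul]
      have hswap2 : b jj * a gk * b jj = u0 := by
        rw [hu0, hbjk]; simp only [mul_assoc]
      have hmatch3 : (st u0 = -u0 ∧ st (a gk1) = -(a gk1)) ∨
          (st u0 = u0 ∧ st (a gk1) = a gk1) := by
        rcases (ha gk).1 with hak | hak <;> rcases (ha gk1).1 with hak1 | hak1
        · -- both skew : u0 skew, matched
          left
          constructor
          · rcases (hb jj).1 with hbj | hbj <;>
              rw [hstu, hbkk, hbj, hak] <;>
              first
                | (simp only [neg_mul, mul_neg, neg_neg]; rw [hswap2])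
                | rw [hswap2]
          · exact hak1
        · -- mixed : contradiction with case hypothesis
          exfalso
          rcases (hb ⟨0, hn0⟩).1 with h0 | h0
          · exact hA ⟨⟨0, hn0⟩, gk, by simpa [hgk] using hk1, Or.inl ⟨h0, hak⟩⟩
          · exact hA ⟨⟨0, hn0⟩, gk1, by simp [hgk1], Or.inr ⟨h0, hak1⟩⟩
        · -- mixed : contradiction
          exfalso
          rcases (hb ⟨0, hn0⟩).1 with h0 | h0
          · exact hA ⟨⟨0, hn0⟩, gk1, by simp [hgk1], Or.inl ⟨h0, hak1⟩⟩
          · exact hA ⟨⟨0, hn0⟩, gk, by simpa [hgk] using hk1, Or.inr ⟨h0, hak⟩⟩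
        · -- both symmetric : u0 symmetric, matched
          right
          constructor
          · rcases (hb jj).1 with hbj | hbj <;>
              rw [hstu, hbkk, hbj, hak] <;>
              first
                | (simp only [neg_mul, mul_neg, neg_neg]; rw [hswap2])
                | rw [hswap2]
          · exact hak1
      have hu0form : ∃ s, u0 = e * s * st e := by
        rw [hu0]
        exact RepeatedFactorAux.formB_step st e he2 hs2 ((hb jj).2) ((ha gk).2) ((hb kk).2)
      have hm := hgen (n-2) (by omega) I3 J3 u0 (a gk1) hu0form ((ha gk1).2) hmatch3
      have hw3 := RepeatedFactorAux.spd (fun t => a (I3 t)) (fun t => b (J3 t)) q j 0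
      simp only [Nat.zero_add] at hw3
      have e1 : RepeatedFactorAux.wp (fun t => a (I3 t)) (fun t => b (J3 t)) 0 j
          = RepeatedFactorAux.wp (fun t => a (I1 t)) (fun t => b (J1 t)) 0 j := by
        apply RepeatedFactorAux.wp_congr
        · intro t ht; show a _ = a _
          rw [hI3, RepeatedFactorAux.srA_le I1 j (n-2) (0+t) (by omega)]
        · intro t ht; show b _ = b _
          rw [hJ3, RepeatedFactorAux.srD'_lt J1 j (n-1) (0+t) (by omega)]
      have e2 : RepeatedFactorAux.dp (fun t => a (I3 t)) (fun t => b (J3 t)) j q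
          = RepeatedFactorAux.dp (fun t => a (I1 (j + q + 1 - t)))
              (fun t => b (J1 (j + q - t))) 0 q := by
        apply RepeatedFactorAux.dp_congr
        · intro t ht1 ht2; show a _ = a _
          rw [hI3, RepeatedFactorAux.srA_gt I1 j (n-2) (j+t) (by omega),
            show n - 2 + j + 1 - (j + t) = j + q + 1 - (0 + t) by omega]
        · intro t ht; show b _ = b _
          rw [hJ3, RepeatedFactorAux.srD'_ge J1 j (n-1) (j+t) (by omega),
            show n - 1 + j - 1 - (j + t) = j + q - (0 + t) by omega]
      have e3 : RepeatedFactorAux.xp (fun t => a (I1 (j + q + 1 - t)))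
            (fun t => b (J1 (j + q - t))) 0 q
          = RepeatedFactorAux.dp (fun t => a (I1 (j + q + 1 - t)))
              (fun t => b (J1 (j + q - t))) 0 q * b (J1 j) := by
        show RepeatedFactorAux.dp _ _ 0 q * _ = _
        congr 1
        show b (J1 (j + q - (0 + q))) = b (J1 j)
        rw [show j + q - (0 + q) = j by omega]
      have e4 : RepeatedFactorAux.wp (fun t => a (I1 (j + q + 1 + 1 - t)))
            (fun t => b (J1 (j + q + 1 + 1 - 1 - t))) 0 1
          = a (I1 n) * (b (J1 (n-1)) * a (I1 (n-1))) := by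
        show a (I1 (j + q + 1 + 1 - 0)) * (b (J1 (j + q + 1 + 1 - 1 - (0+0))) *
            a (I1 (j + q + 1 + 1 - (0+0+1)))) = _
        rw [show j + q + 1 + 1 - 0 = n by omega,
          show j + q + 1 + 1 - 1 - (0+0) = n - 1 by omega,
          show j + q + 1 + 1 - (0+0+1) = n - 1 by omega]
      have heq : RepeatedFactorAux.wp (fun t => a (I1 t)) (fun t => b (J1 t)) 0 j *
          (RepeatedFactorAux.xp (fun t => a (I1 (j + q + 1 - t)))
              (fun t => b (J1 (j + q - t))) 0 q *
            RepeatedFactorAux.wp (fun t => a (I1 (j + q + 1 + 1 - t)))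
              (fun t => b (J1 (j + q + 1 + 1 - 1 - t))) 0 1)
          = RepeatedFactorAux.wp (fun t => a (I3 t)) (fun t => b (J3 t)) 0 (n-2) *
              (u0 * a gk1) := by
        rw [e3, e4, show n - 2 = j + q by omega, hw3, e1, e2, hu0, hI1n, hJ1n1, hI1n1, hJ1j]
        simp only [mul_assoc]
      rw [heq]
      exact hm
    exact relstep _ _ hrel1 (relstep _ _ hsm2 hterm)
end

section
/- Let A be a unital associative F-algebra with an involution *, and suppose A is semiprime in the sense that for every a ∈ A, if a r a = 0 for all r ∈ A then a = 0. If k ∈ K satisfies k a k = 0 for all a ∈ K, then k = 0. -/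
/-- **Lemma 9.**  Let `A` be a semiprime unital `F`-algebra with involution
(`F` of characteristic `≠ 2`).  If a skew-symmetric element `k` satisfies `k a k = 0`
for every skew-symmetric `a`, then `k = 0`. -/
theorem skew_element_vanishes_of_kKk_zero
    (F : Type*) [Field F] (hchar : (2 : F) ≠ 0)
    (A : Type*) [Ring A] [Algebra F A]
    (st : A →ₗ[F] A)
    (hst_mul : ∀ a b : A, st (a * b) = st b * st a)
    (hst_inv : ∀ a : A, st (st a) = a)
    (hsemiprime : ∀ a : A, (∀ r : A, a * r * a = 0) → a = 0)
    (k : A) (hk : st k = -k)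
    (hkKk : ∀ a : A, st a = -a → k * a * k = 0) :
    k = 0 := by
  -- the skew part of any element
  have hskew : ∀ r : A, st ((2:F)⁻¹ • (r - st r)) = -((2:F)⁻¹ • (r - st r)) := by
    intro r
    rw [map_smul, map_sub, hst_inv, ← smul_neg]
    congr 1; abel
  have hsplit : ∀ r : A, r - (2:F)⁻¹ • (r + st r) = (2:F)⁻¹ • (r - st r) := by
    intro r
    match_scalars <;> field_simp <;> ring
  have hsymm : ∀ r : A, st ((2:F)⁻¹ • (r + st r)) = (2:F)⁻¹ • (r + st r) := by
    intro r
    rw [map_smul, map_add, hst_inv]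
    congr 1; abel
  -- only the symmetric part of r matters in k r k
  have hhalf : ∀ r : A, k * r * k = k * ((2:F)⁻¹ • (r + st r)) * k := by
    intro r
    have h0 := hkKk _ (hskew r)
    have h1 : k * r * k - k * ((2:F)⁻¹ • (r + st r)) * k = 0 := by
      rw [← sub_mul, ← mul_sub, hsplit r, h0]
    exact sub_eq_zero.mp h1
  -- Step 1 : for symmetric s, k s k s k = 0
  have L1 : ∀ s : A, st s = s → k * s * k * s * k = 0 := by
    intro s hs
    have h := hkKk (s * (k * s)) ?_
    · calc k * s * k * s * k = k * (s * (k * s)) * k := by noncomm_ring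
        _ = 0 := h
    · rw [hst_mul, hst_mul, hs, hk]
      noncomm_ring
  -- Step 2 : polarization, for symmetric s, s' : k s k s' k = - k s' k s k
  have L2 : ∀ s s' : A, st s = s → st s' = s' →
      k * s * k * s' * k = -(k * s' * k * s * k) := by
    intro s s' hs hs'
    have hsum : st (s + s') = s + s' := by rw [map_add, hs, hs']
    have h := L1 (s + s') hsum
    have h1 := L1 s hs
    have h2 := L1 s' hs'
    have hexp : k * (s + s') * k * (s + s') * k =
        k * s * k * s * k + k * s * k * s' * k + k * s' * k * s * k
          + k * s' * k * s' * k := by noncomm_ring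
    rw [hexp, h1, h2] at h
    rw [zero_add, add_zero] at h
    exact eq_neg_of_add_eq_zero_left h
  -- Step 3 : for symmetric s, (k s k) r (k s k) = 0
  have L3 : ∀ s : A, st s = s → k * s * k = 0 := by
    intro s hs
    apply hsemiprime
    intro r
    have hsr := hsymm r
    have hkr := hhalf r
    set sr := (2:F)⁻¹ • (r + st r) with hsrdef
    have h2 : k * s * k * sr * k = -(k * sr * k * s * k) := L2 s sr hs hsr
    have h1 : k * s * k * s * k = 0 := L1 s hs
    calc k * s * k * r * (k * s * k)
        = (k * r * k) * s * k * s * k - (k * r * k) * s * k * s * k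
            + k * s * (k * r * k) * s * k := by noncomm_ring
      _ = (k * r * k) * s * k * s * k - (k * r * k) * s * k * s * k
            + k * s * (k * sr * k) * s * k := by rw [hkr]
      _ = -(k * sr * (k * s * k * s * k)) + (k * s * k * sr * k
            + k * sr * k * s * k) * s * k := by noncomm_ring
      _ = 0 := by
          rw [h1, h2]
          noncomm_ring
  -- conclude
  apply hsemiprime
  intro r
  rw [hhalf r]
  exact L3 _ (hsymm r)
end

section
/- Let R be a simple finitely generated unital associative F-algebra with center Z. If R is finite-dimensional as a module over Z, then R is finite-dimensional as a vector space over F. -/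
/-!
By Artin–Tate, the center `Z` of `R` is a finitely generated `F`-algebra, since `R` is finitely
generated over `F` and module-finite over `Z`. As `R` is simple, `Z` is a field, so Zariski's
lemma makes `Z` finite over `F`, and `R` is finite over `F` by transitivity.
-/

/-- The Artin–Tate lemma, with the top ring `C` not required to be commutative. -/
theorem Algebra.FiniteType.of_finite_of_injective {A B C : Type*} [CommRing A] [CommRing B]
    [Ring C] [Algebra A B] [Algebra B C] [Algebra A C] [IsScalarTower A B C]
    [IsNoetherianRing A] [Algebra.FiniteType A C] [Module.Finite B C]
    (hBC : Function.Injective (algebraMap B C)) : Algebra.FiniteType A B := by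
  obtain ⟨B₀, hB₀, hB₀C⟩ := exists_subalgebra_of_fg A B C Algebra.FiniteType.out
    (Module.Finite.fg_top (R := B))
  have : IsNoetherianRing B₀ := isNoetherianRing_of_fg hB₀
  have : Module.Finite B₀ C := ⟨hB₀C⟩
  have hB₀B : (⊤ : Submodule B₀ B).FG :=
    fg_of_injective (IsScalarTower.toAlgHom B₀ B C).toLinearMap hBC
  exact ⟨Algebra.fg_trans' (B₀.fg_top.2 hB₀) (Subalgebra.fg_of_submodule_fg hB₀B)⟩

theorem Module.Finite.of_finiteType_of_finite_field {F Z R : Type*} [Field F] [Field Z] [Ring R]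
    [Nontrivial R] [Algebra F Z] [Algebra Z R] [Algebra F R] [IsScalarTower F Z R]
    [Algebra.FiniteType F R] [Module.Finite Z R] : Module.Finite F R := by
  have : Algebra.FiniteType F Z :=
    .of_finite_of_injective (C := R) (algebraMap Z R).injective
  have : Module.Finite F Z := finite_of_finite_type_of_isJacobsonRing F Z
  exact .trans Z R

theorem simple_fg_finite_over_center_finite_over_base_general
    (F : Type*) [Field F]
    (R : Type*) [Ring R] [Algebra F R] [IsSimpleRing R]
    (hfg : ∃ s : Finset R, Algebra.adjoin F (s : Set R) = ⊤)
    (hZ : Module.Finite (Subring.center R) R) :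
    FiniteDimensional F R := by
  let Z := Subring.center R
  let _ : Field Z := (IsSimpleRing.isField_center R).toField
  let _ : Algebra F Z :=
    ((algebraMap F R).codRestrict Z fun r => Set.algebraMap_mem_center r).toAlgebra
  have : IsScalarTower F Z R := .of_algebraMap_eq fun _ => rfl
  have : Algebra.FiniteType F R := ⟨hfg⟩
  exact .of_finiteType_of_finite_field (Z := Z)

/-- If a simple finitely generated unital `F`-algebra `R` is finite-dimensional over its
center `Z`, then `R` is finite-dimensional over `F`. -/
theorem simple_fg_finite_over_center_finite_over_base
    (F : Type*) [Field F] (hchar : (2 : F) ≠ 0)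
    (R : Type*) [Ring R] [Algebra F R] [IsSimpleRing R]
    (hfg : ∃ s : Finset R, Algebra.adjoin F (s : Set R) = ⊤)
    (hZ : Module.Finite (Subring.center R) R) :
    FiniteDimensional F R :=
  simple_fg_finite_over_center_finite_over_base_general F R hfg hZ
end
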